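/- arXiv:2009.03526 — 5 statements merged into one kernel-verified Lean document; each statement's English description precedes it below -/
import Mathlib

section
/- For all partitions λ ≠ ρ, the identity ∑_{ν ∈ U(λ)∩U(ρ)} ψ_{ν/λ}(q,t)·φ_{ν/ρ}(q,t) = ∑_{μ ∈ D(λ)∩D(ρ)} ψ_{ρ/μ}(q,t)·φ_{λ/μ}(q,t) holds in ℚ(q,t). -/
open Finset

noncomputable section

/-- The field `ℚ(q,t)` of rational functions in two variables over `ℚ`. -/
abbrev K : Type := FractionRing (MvPolynomial (Fin 2) ℚ)

def q : K := algebraMap (MvPolynomial (Fin 2) ℚ) K (MvPolynomial.X 0)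
def t : K := algebraMap (MvPolynomial (Fin 2) ℚ) K (MvPolynomial.X 1)

/-- Arm-length of the cell `c = (row, col)` of `κ` (cells are 0-indexed, Mathlib convention). -/
def arm (κ : YoungDiagram) (c : ℕ × ℕ) : ℕ := κ.rowLen c.1 - c.2 - 1

/-- Leg-length of the cell `c = (row, col)` of `κ`. -/
def leg (κ : YoungDiagram) (c : ℕ × ℕ) : ℕ := κ.colLen c.2 - c.1 - 1

/-- Hook-length of the cell `c` of `κ`. -/
def hook (κ : YoungDiagram) (c : ℕ × ℕ) : ℕ := arm κ c + leg κ c + 1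

/-- `Covers μ λ` means `μ ⋖ λ` in Young's lattice. -/
def Covers (μ l : YoungDiagram) : Prop :=
  μ.cells ⊆ l.cells ∧ l.cells.card = μ.cells.card + 1

open scoped Classical in
/-- For `μ ⋖ λ`, the set `R_{λ/μ}` of cells of `μ` in the same row as the unique cell of `λ/μ`. -/
def Rset (μ l : YoungDiagram) : Finset (ℕ × ℕ) :=
  μ.cells.filter fun c => ∃ d ∈ l.cells \ μ.cells, c.1 = d.1

open scoped Classical in
/-- For `μ ⋖ λ`, the set `C_{λ/μ}` of cells of `μ` in the same column as the unique cell of `λ/μ`. -/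
def Cset (μ l : YoungDiagram) : Finset (ℕ × ℕ) :=
  μ.cells.filter fun c => ∃ d ∈ l.cells \ μ.cells, c.2 = d.2

/-- `[i,j] = 1 - q^i t^j`. -/
def brk (i j : ℕ) : K := 1 - q ^ i * t ^ j

/-- `b_κ(c) = (1 - q^{a} t^{ℓ+1})/(1 - q^{a+1} t^{ℓ})`. -/
def bcell (κ : YoungDiagram) (c : ℕ × ℕ) : K :=
  brk (arm κ c) (leg κ c + 1) / brk (arm κ c + 1) (leg κ c)

/-- `ψ_{λ/μ}(q,t)` for `μ ⋖ λ`. -/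
def ψqt (μ l : YoungDiagram) : K := ∏ c ∈ Rset μ l, bcell μ c / bcell l c

/-- `φ_{λ/μ}(q,t)` for `μ ⋖ λ`. -/
def φqt (μ l : YoungDiagram) : K :=
  ((1 - t) / (1 - q)) * ∏ c ∈ Cset μ l, bcell l c / bcell μ c

/-- `α_{ν/λ}(q,t)` for `λ ⋖ ν`. -/
def alph (l ν : YoungDiagram) : K :=
  (∏ c ∈ Rset l ν, brk (arm l c) (leg l c + 1) / brk (arm ν c) (leg ν c + 1)) *
  (∏ c ∈ Cset l ν, brk (arm l c + 1) (leg l c) / brk (arm ν c + 1) (leg ν c))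

/-- `ᾱ_{ν/λ}(q,t)` for `λ ⋖ ν`. -/
def alphBar (l ν : YoungDiagram) : K :=
  (∏ c ∈ Rset l ν, brk (arm l c + 1) (leg l c) / brk (arm ν c + 1) (leg ν c)) *
  (∏ c ∈ Cset l ν, brk (arm l c) (leg l c + 1) / brk (arm ν c) (leg ν c + 1))

/-- `n(κ) = ∑_{c ∈ κ} ℓ_κ(c)` (as an integer). -/
def nstat (κ : YoungDiagram) : ℤ := ∑ c ∈ κ.cells, (leg κ c : ℤ)

/-- `n'(κ) = ∑_{c ∈ κ} a_κ(c)` (as an integer). -/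
def nstat' (κ : YoungDiagram) : ℤ := ∑ c ∈ κ.cells, (arm κ c : ℤ)



/-! ### Auxiliary lemmas -/

section Aux

open YoungDiagram

lemma brk_ne_zero {i j : ℕ} (h : i + j ≠ 0) : brk i j ≠ 0 := by
  unfold brk
  intro hzero
  have h1 : q ^ i * t ^ j = 1 := (sub_eq_zero.mp hzero).symm
  have h2 : (algebraMap (MvPolynomial (Fin 2) ℚ) K)
      (MvPolynomial.X 0 ^ i * MvPolynomial.X 1 ^ j) =
      (algebraMap (MvPolynomial (Fin 2) ℚ) K) 1 := by
    simpa [map_mul, map_pow, q, t] using h1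
  have heq := IsFractionRing.injective (MvPolynomial (Fin 2) ℚ) K h2
  have h3 := congrArg (MvPolynomial.eval (fun _ => (0 : ℚ))) heq
  simp only [MvPolynomial.eval_mul, MvPolynomial.eval_pow, MvPolynomial.eval_X,
    map_one] at h3
  rcases Nat.eq_zero_or_pos i with hi | hi
  · subst hi
    rw [pow_zero, one_mul, zero_pow (by omega : j ≠ 0)] at h3
    norm_num at h3
  · rw [zero_pow (by omega : i ≠ 0)] at h3
    norm_num at h3

lemma bcell_ne_zero (κ : YoungDiagram) (c : ℕ × ℕ) : bcell κ c ≠ 0 := by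
  unfold bcell
  exact div_ne_zero (brk_ne_zero (by omega)) (brk_ne_zero (by omega))

lemma rowLen_congr {μ ν : YoungDiagram} {i : ℕ} (h : ∀ j, (i, j) ∈ μ ↔ (i, j) ∈ ν) :
    μ.rowLen i = ν.rowLen i :=
  eq_of_forall_lt_iff fun j => by rw [← mem_iff_lt_rowLen, ← mem_iff_lt_rowLen, h]

lemma colLen_congr {μ ν : YoungDiagram} {j : ℕ} (h : ∀ i, (i, j) ∈ μ ↔ (i, j) ∈ ν) :
    μ.colLen j = ν.colLen j :=
  eq_of_forall_lt_iff fun i => by rw [← mem_iff_lt_colLen, ← mem_iff_lt_colLen, h]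

lemma rowLen_insert {κ l : YoungDiagram} {d : ℕ × ℕ} (h : l.cells = insert d κ.cells)
    {i : ℕ} (hi : i ≠ d.1) : l.rowLen i = κ.rowLen i := by
  apply rowLen_congr
  intro j
  rw [← YoungDiagram.mem_cells, ← YoungDiagram.mem_cells, h, Finset.mem_insert]
  constructor
  · rintro (hc | hc)
    · exact absurd (congrArg Prod.fst hc) hi
    · exact hc
  · exact fun hc => Or.inr hc

lemma colLen_insert {κ l : YoungDiagram} {d : ℕ × ℕ} (h : l.cells = insert d κ.cells)
    {j : ℕ} (hj : j ≠ d.2) : l.colLen j = κ.colLen j := by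
  apply colLen_congr
  intro i
  rw [← YoungDiagram.mem_cells, ← YoungDiagram.mem_cells, h, Finset.mem_insert]
  constructor
  · rintro (hc | hc)
    · exact absurd (congrArg Prod.snd hc) hj
    · exact hc
  · exact fun hc => Or.inr hc

lemma bcell_insert {κ l : YoungDiagram} {d : ℕ × ℕ} (h : l.cells = insert d κ.cells)
    {c : ℕ × ℕ} (h1 : c.1 ≠ d.1) (h2 : c.2 ≠ d.2) : bcell l c = bcell κ c := by
  unfold bcell arm leg
  rw [rowLen_insert h h1, colLen_insert h h2]

lemma corner_eq {μ l : YoungDiagram} {d : ℕ × ℕ} (hd : d ∉ μ.cells)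
    (h : l.cells = insert d μ.cells) : d.2 = μ.rowLen d.1 ∧ d.1 = μ.colLen d.2 := by
  rw [YoungDiagram.mem_cells] at hd
  have hd2 : ¬ d.2 < μ.rowLen d.1 := fun hlt => hd (by
    have : (d.1, d.2) ∈ μ := mem_iff_lt_rowLen.mpr hlt
    simpa using this)
  have hd1 : ¬ d.1 < μ.colLen d.2 := fun hlt => hd (by
    have : (d.1, d.2) ∈ μ := mem_iff_lt_colLen.mpr hlt
    simpa using this)
  have hdl : d ∈ l.cells := by rw [h]; exact Finset.mem_insert_self d _
  rw [YoungDiagram.mem_cells] at hdl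
  have hdl' : (d.1, d.2) ∈ l := by simpa using hdl
  constructor
  · -- d.2 = rowLen
    refine le_antisymm ?_ (by omega)
    by_contra hlt
    push_neg at hlt
    have h1 : (d.1, d.2 - 1) ∈ l := l.up_left_mem le_rfl (Nat.sub_le _ _) hdl'
    have h1' : (d.1, d.2 - 1) ∈ insert d μ.cells := by
      rw [← h]
      simpa using h1
    rcases Finset.mem_insert.mp h1' with h2 | h2
    · have h3 : d.2 - 1 = d.2 := congrArg Prod.snd h2
      omega
    · have h3 : (d.1, d.2 - 1) ∈ μ := by simpa using h2
      rw [mem_iff_lt_rowLen] at h3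
      omega
  · refine le_antisymm ?_ (by omega)
    by_contra hlt
    push_neg at hlt
    have h1 : (d.1 - 1, d.2) ∈ l := l.up_left_mem (Nat.sub_le _ _) le_rfl hdl'
    have h1' : (d.1 - 1, d.2) ∈ insert d μ.cells := by
      rw [← h]
      simpa using h1
    rcases Finset.mem_insert.mp h1' with h2 | h2
    · have h3 : d.1 - 1 = d.1 := congrArg Prod.fst h2
      omega
    · have h3 : (d.1 - 1, d.2) ∈ μ := by simpa using h2
      rw [mem_iff_lt_colLen] at h3
      omega

lemma sdiff_insert {μ l : YoungDiagram} {d : ℕ × ℕ} (hd : d ∉ μ.cells)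
    (h : l.cells = insert d μ.cells) : l.cells \ μ.cells = {d} := by
  rw [h]
  ext c
  simp only [Finset.mem_sdiff, Finset.mem_insert, Finset.mem_singleton]
  constructor
  · rintro ⟨hc | hc, hc2⟩
    · exact hc
    · exact absurd hc hc2
  · rintro rfl
    exact ⟨Or.inl rfl, hd⟩

open scoped Classical in
lemma Rset_eq {μ l : YoungDiagram} {d : ℕ × ℕ} (hd : d ∉ μ.cells)
    (h : l.cells = insert d μ.cells) :
    Rset μ l = μ.cells.filter (fun c => c.1 = d.1) := by
  unfold Rset
  rw [sdiff_insert hd h]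
  apply Finset.filter_congr
  intro c _
  simp

open scoped Classical in
lemma Cset_eq {μ l : YoungDiagram} {d : ℕ × ℕ} (hd : d ∉ μ.cells)
    (h : l.cells = insert d μ.cells) :
    Cset μ l = μ.cells.filter (fun c => c.2 = d.2) := by
  unfold Cset
  rw [sdiff_insert hd h]
  apply Finset.filter_congr
  intro c _
  simp

lemma covers_exists {μ l : YoungDiagram} (h : Covers μ l) :
    ∃ A, A ∉ μ.cells ∧ l.cells = insert A μ.cells := by
  obtain ⟨hsub, hcard⟩ := h
  have h1 : (l.cells \ μ.cells).card = 1 := by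
    rw [Finset.card_sdiff_of_subset hsub]; omega
  obtain ⟨A, hA⟩ := Finset.card_eq_one.mp h1
  have hAmem : A ∈ l.cells \ μ.cells := hA ▸ Finset.mem_singleton_self A
  rw [Finset.mem_sdiff] at hAmem
  refine ⟨A, hAmem.2, ?_⟩
  ext c
  rw [Finset.mem_insert]
  constructor
  · intro hc
    by_cases hcμ : c ∈ μ.cells
    · exact Or.inr hcμ
    · left
      have : c ∈ l.cells \ μ.cells := Finset.mem_sdiff.mpr ⟨hc, hcμ⟩
      rw [hA] at this
      exact Finset.mem_singleton.mp this
  · rintro (rfl | hc)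
    · exact hAmem.1
    · exact hsub hc

lemma up_unique {l ρ ν : YoungDiagram} (hlν : Covers l ν) (hρν : Covers ρ ν) (hne : l ≠ ρ) :
    ν = l ⊔ ρ ∧ Covers (l ⊓ ρ) l ∧ Covers (l ⊓ ρ) ρ := by
  obtain ⟨hl, hlc⟩ := hlν
  obtain ⟨hρ, hρc⟩ := hρν
  have hcards : ρ.cells.card = l.cells.card := by omega
  have hsub : l.cells ∪ ρ.cells ⊆ ν.cells := Finset.union_subset hl hρ
  have hge : l.cells.card ≤ (l.cells ∪ ρ.cells).card :=
    Finset.card_le_card Finset.subset_union_left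
  have hneq : (l.cells ∪ ρ.cells).card ≠ l.cells.card := by
    intro hcu
    have h1 : l.cells = l.cells ∪ ρ.cells :=
      Finset.eq_of_subset_of_card_le Finset.subset_union_left (le_of_eq hcu)
    have h2 : ρ.cells ⊆ l.cells := by rw [h1]; exact Finset.subset_union_right
    exact hne (YoungDiagram.ext
      (Finset.eq_of_subset_of_card_le h2 (le_of_eq hcards.symm)).symm)
  have hle : (l.cells ∪ ρ.cells).card ≤ ν.cells.card := Finset.card_le_card hsub
  have hνeq : ν.cells = l.cells ∪ ρ.cells :=
    (Finset.eq_of_subset_of_card_le hsub (by omega)).symm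
  have hinter := Finset.card_union_add_card_inter l.cells ρ.cells
  have hicard : (l.cells ∩ ρ.cells).card + 1 = l.cells.card := by omega
  refine ⟨YoungDiagram.ext (by rw [hνeq, YoungDiagram.cells_sup]), ?_, ?_⟩
  · exact ⟨by rw [YoungDiagram.cells_inf]; exact Finset.inter_subset_left,
      by rw [YoungDiagram.cells_inf]; omega⟩
  · exact ⟨by rw [YoungDiagram.cells_inf]; exact Finset.inter_subset_right,
      by rw [YoungDiagram.cells_inf]; omega⟩

lemma down_to_up {μ l ρ : YoungDiagram} (hμl : Covers μ l) (hμρ : Covers μ ρ) (hne : l ≠ ρ) :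
    μ = l ⊓ ρ ∧ Covers l (l ⊔ ρ) ∧ Covers ρ (l ⊔ ρ) := by
  obtain ⟨hl, hlc⟩ := hμl
  obtain ⟨hρ, hρc⟩ := hμρ
  have hsub : μ.cells ⊆ l.cells ∩ ρ.cells := Finset.subset_inter hl hρ
  have hge : μ.cells.card ≤ (l.cells ∩ ρ.cells).card := Finset.card_le_card hsub
  have hle : (l.cells ∩ ρ.cells).card ≤ l.cells.card :=
    Finset.card_le_card Finset.inter_subset_left
  have hneq : (l.cells ∩ ρ.cells).card ≠ l.cells.card := by
    intro hcu
    have h1 : l.cells ∩ ρ.cells = l.cells :=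
      Finset.eq_of_subset_of_card_le Finset.inter_subset_left (le_of_eq hcu.symm)
    have h2 : l.cells ⊆ ρ.cells := by rw [← h1]; exact Finset.inter_subset_right
    exact hne (YoungDiagram.ext (Finset.eq_of_subset_of_card_le h2 (by omega)))
  have hμeq : μ.cells = l.cells ∩ ρ.cells :=
    Finset.eq_of_subset_of_card_le hsub (by omega)
  have hinter := Finset.card_union_add_card_inter l.cells ρ.cells
  refine ⟨YoungDiagram.ext (by rw [hμeq, YoungDiagram.cells_inf]), ?_, ?_⟩
  · exact ⟨by rw [YoungDiagram.cells_sup]; exact Finset.subset_union_left,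
      by rw [YoungDiagram.cells_sup]; omega⟩
  · exact ⟨by rw [YoungDiagram.cells_sup]; exact Finset.subset_union_right,
      by rw [YoungDiagram.cells_sup]; omega⟩

open scoped Classical in
lemma key (μ l ρ ν : YoungDiagram) (A B : ℕ × ℕ)
    (hA : A ∉ μ.cells) (hB : B ∉ μ.cells) (hAB : A ≠ B)
    (hl : l.cells = insert A μ.cells) (hρ : ρ.cells = insert B μ.cells)
    (hν : ν.cells = insert A (insert B μ.cells)) :
    ψqt l ν * φqt ρ ν = ψqt μ ρ * φqt μ l := by
  obtain ⟨hA2, hA1⟩ := corner_eq hA hl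
  obtain ⟨hB2, hB1⟩ := corner_eq hB hρ
  have hne1 : A.1 ≠ B.1 := by
    intro h
    exact hAB (Prod.ext_iff.mpr ⟨h, by rw [hA2, hB2, h]⟩)
  have hne2 : A.2 ≠ B.2 := by
    intro h
    exact hAB (Prod.ext_iff.mpr ⟨by rw [hA1, hB1, h], h⟩)
  have hBl : B ∉ l.cells := by
    rw [hl, Finset.mem_insert]
    rintro (h | h)
    · exact hAB h.symm
    · exact hB h
  have hAρ : A ∉ ρ.cells := by
    rw [hρ, Finset.mem_insert]
    rintro (h | h)
    · exact hAB h
    · exact hA h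
  have hνl : ν.cells = insert B l.cells := by rw [hν, hl, Finset.insert_comm]
  have hνρ : ν.cells = insert A ρ.cells := by rw [hν, hρ]
  -- Rset and Cset computations
  have hR1 : Rset l ν = μ.cells.filter (fun c => c.1 = B.1) := by
    rw [Rset_eq hBl hνl, hl, Finset.filter_insert, if_neg hne1]
  have hR2 : Rset μ ρ = μ.cells.filter (fun c => c.1 = B.1) := Rset_eq hB hρ
  have hC1 : Cset ρ ν = μ.cells.filter (fun c => c.2 = A.2) := by
    rw [Cset_eq hAρ hνρ, hρ, Finset.filter_insert, if_neg (Ne.symm hne2)]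
  have hC2 : Cset μ l = μ.cells.filter (fun c => c.2 = A.2) := Cset_eq hA hl
  set R := μ.cells.filter (fun c => c.1 = B.1) with hRdef
  set C := μ.cells.filter (fun c => c.2 = A.2) with hCdef
  have hmemR : ∀ c ∈ R, c ∈ μ.cells ∧ c.1 = B.1 ∧ c.2 < B.2 := by
    intro c hc
    rw [hRdef, Finset.mem_filter] at hc
    refine ⟨hc.1, hc.2, ?_⟩
    have hcm : (c.1, c.2) ∈ μ := by simpa using hc.1
    rw [YoungDiagram.mem_iff_lt_rowLen, hc.2] at hcm
    omega
  have hmemC : ∀ c ∈ C, c ∈ μ.cells ∧ c.2 = A.2 ∧ c.1 < A.1 := by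
    intro c hc
    rw [hCdef, Finset.mem_filter] at hc
    refine ⟨hc.1, hc.2, ?_⟩
    have hcm : (c.1, c.2) ∈ μ := by simpa using hc.1
    rw [YoungDiagram.mem_iff_lt_colLen, hc.2] at hcm
    omega
  have termR : ∀ c ∈ R, c.2 ≠ A.2 →
      bcell l c / bcell ν c = bcell μ c / bcell ρ c := by
    intro c hc hcA
    obtain ⟨hcμ, hc1, hc2⟩ := hmemR c hc
    have h1 : c.1 ≠ A.1 := by rw [hc1]; exact Ne.symm hne1
    rw [bcell_insert hl h1 hcA, bcell_insert hνρ h1 hcA]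
  have termC : ∀ c ∈ C, c.1 ≠ B.1 →
      bcell ν c / bcell ρ c = bcell l c / bcell μ c := by
    intro c hc hcB
    obtain ⟨hcμ, hc2, hc1⟩ := hmemC c hc
    have h2 : c.2 ≠ B.2 := by rw [hc2]; exact hne2
    rw [bcell_insert hνl hcB h2, bcell_insert hρ hcB h2]
  -- reduce the goal
  unfold ψqt φqt
  rw [hR1, hR2, hC1, hC2]
  have main : (∏ c ∈ R, bcell l c / bcell ν c) * (∏ c ∈ C, bcell ν c / bcell ρ c)
      = (∏ c ∈ R, bcell μ c / bcell ρ c) * (∏ c ∈ C, bcell l c / bcell μ c) := by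
    rcases lt_or_gt_of_ne hne2 with hlt | hlt
    · -- A.2 < B.2, hence B.1 < A.1; crossing cell w = (B.1, A.2)
      have hBA1 : B.1 < A.1 := by
        by_contra hcon
        push_neg at hcon
        have := μ.rowLen_anti A.1 B.1 hcon
        omega
      set w : ℕ × ℕ := (B.1, A.2) with hwdef
      have hwμ : w ∈ μ.cells := by
        have : (B.1, A.2) ∈ μ := YoungDiagram.mem_iff_lt_rowLen.mpr (by omega)
        simpa [hwdef] using this
      have hwR : w ∈ R := by
        rw [hRdef, Finset.mem_filter]
        exact ⟨hwμ, rfl⟩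
      have hwC : w ∈ C := by
        rw [hCdef, Finset.mem_filter]
        exact ⟨hwμ, rfl⟩
      rw [← Finset.mul_prod_erase R (fun c => bcell l c / bcell ν c) hwR,
        ← Finset.mul_prod_erase C (fun c => bcell ν c / bcell ρ c) hwC,
        ← Finset.mul_prod_erase R (fun c => bcell μ c / bcell ρ c) hwR,
        ← Finset.mul_prod_erase C (fun c => bcell l c / bcell μ c) hwC]
      have hprodR : (∏ c ∈ R.erase w, bcell l c / bcell ν c)
          = ∏ c ∈ R.erase w, bcell μ c / bcell ρ c := by
        apply Finset.prod_congr rfl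
        intro c hc
        rw [Finset.mem_erase] at hc
        obtain ⟨hcw, hcR⟩ := hc
        apply termR c hcR
        intro hcA
        exact hcw (Prod.ext_iff.mpr ⟨(hmemR c hcR).2.1, hcA⟩)
      have hprodC : (∏ c ∈ C.erase w, bcell ν c / bcell ρ c)
          = ∏ c ∈ C.erase w, bcell l c / bcell μ c := by
        apply Finset.prod_congr rfl
        intro c hc
        rw [Finset.mem_erase] at hc
        obtain ⟨hcw, hcC⟩ := hc
        apply termC c hcC
        intro hcB
        exact hcw (Prod.ext_iff.mpr ⟨hcB, (hmemC c hcC).2.1⟩)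
      rw [hprodR, hprodC]
      have hwterm : (bcell l w / bcell ν w) * (bcell ν w / bcell ρ w)
          = (bcell μ w / bcell ρ w) * (bcell l w / bcell μ w) := by
        have h1 := bcell_ne_zero ν w
        have h2 := bcell_ne_zero μ w
        have h3 := bcell_ne_zero ρ w
        have h4 := bcell_ne_zero l w
        field_simp
      calc (bcell l w / bcell ν w * ∏ c ∈ R.erase w, bcell μ c / bcell ρ c) *
            (bcell ν w / bcell ρ w * ∏ c ∈ C.erase w, bcell l c / bcell μ c)
          = ((bcell l w / bcell ν w) * (bcell ν w / bcell ρ w)) *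
            ((∏ c ∈ R.erase w, bcell μ c / bcell ρ c) *
             (∏ c ∈ C.erase w, bcell l c / bcell μ c)) := by ring
        _ = ((bcell μ w / bcell ρ w) * (bcell l w / bcell μ w)) *
            ((∏ c ∈ R.erase w, bcell μ c / bcell ρ c) *
             (∏ c ∈ C.erase w, bcell l c / bcell μ c)) := by rw [hwterm]
        _ = (bcell μ w / bcell ρ w * ∏ c ∈ R.erase w, bcell μ c / bcell ρ c) *
            (bcell l w / bcell μ w * ∏ c ∈ C.erase w, bcell l c / bcell μ c) := by ring
    · -- B.2 < A.2, hence A.1 < B.1; no crossing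
      have hAB1 : A.1 < B.1 := by
        by_contra hcon
        push_neg at hcon
        have := μ.rowLen_anti B.1 A.1 hcon
        omega
      have h1 : (∏ c ∈ R, bcell l c / bcell ν c) = ∏ c ∈ R, bcell μ c / bcell ρ c := by
        apply Finset.prod_congr rfl
        intro c hc
        apply termR c hc
        have := (hmemR c hc).2.2
        omega
      have h2 : (∏ c ∈ C, bcell ν c / bcell ρ c) = ∏ c ∈ C, bcell l c / bcell μ c := by
        apply Finset.prod_congr rfl
        intro c hc
        apply termC c hc
        have h3 := (hmemC c hc).2.2
        omega
      rw [h1, h2]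
  linear_combination ((1 - t) / (1 - q)) * main

end Aux

/-- For partitions `λ ≠ ρ`:
`∑_{ν ∈ U(λ)∩U(ρ)} ψ_{ν/λ} φ_{ν/ρ} = ∑_{μ ∈ D(λ)∩D(ρ)} ψ_{ρ/μ} φ_{λ/μ}` in `ℚ(q,t)`. -/
theorem qt_commutator_offdiagonal (l ρ : YoungDiagram) (hne : l ≠ ρ) :
    ∑ᶠ ν ∈ {ν : YoungDiagram | Covers l ν ∧ Covers ρ ν}, ψqt l ν * φqt ρ ν
      = ∑ᶠ μ ∈ {μ : YoungDiagram | Covers μ l ∧ Covers μ ρ}, ψqt μ ρ * φqt μ l := by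
  by_cases hex : ∃ ν, Covers l ν ∧ Covers ρ ν
  · obtain ⟨ν0, hlν, hρν⟩ := hex
    obtain ⟨hν0, hil, hiρ⟩ := up_unique hlν hρν hne
    have hsetU : {ν : YoungDiagram | Covers l ν ∧ Covers ρ ν} = {l ⊔ ρ} := by
      ext ν
      simp only [Set.mem_setOf_eq, Set.mem_singleton_iff]
      constructor
      · rintro ⟨h1, h2⟩
        exact (up_unique h1 h2 hne).1
      · rintro rfl
        exact (down_to_up hil hiρ hne).2
    have hsetD : {μ : YoungDiagram | Covers μ l ∧ Covers μ ρ} = {l ⊓ ρ} := by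
      ext μ
      simp only [Set.mem_setOf_eq, Set.mem_singleton_iff]
      constructor
      · rintro ⟨h1, h2⟩
        exact (down_to_up h1 h2 hne).1
      · rintro rfl
        exact ⟨hil, hiρ⟩
    rw [hsetU, hsetD, finsum_mem_singleton, finsum_mem_singleton]
    obtain ⟨A, hA, hlA⟩ := covers_exists hil
    obtain ⟨B, hB, hρB⟩ := covers_exists hiρ
    have hAB : A ≠ B := by
      rintro rfl
      exact hne (YoungDiagram.ext (by rw [hlA, hρB]))
    have hν : (l ⊔ ρ).cells = insert A (insert B (l ⊓ ρ).cells) := by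
      rw [YoungDiagram.cells_sup, hlA, hρB]
      ext c
      simp only [Finset.mem_union, Finset.mem_insert]
      tauto
    exact key (l ⊓ ρ) l ρ (l ⊔ ρ) A B hA hB hAB hlA hρB hν
  · have hex2 : ¬ ∃ μ, Covers μ l ∧ Covers μ ρ := by
      rintro ⟨μ, h1, h2⟩
      exact hex ⟨l ⊔ ρ, (down_to_up h1 h2 hne).2⟩
    have h1 : {ν : YoungDiagram | Covers l ν ∧ Covers ρ ν} = ∅ := by
      ext ν
      simp only [Set.mem_setOf_eq, Set.mem_empty_iff_false, iff_false]
      exact fun h => hex ⟨ν, h⟩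
    have h2 : {μ : YoungDiagram | Covers μ l ∧ Covers μ ρ} = ∅ := by
      ext μ
      simp only [Set.mem_setOf_eq, Set.mem_empty_iff_false, iff_false]
      exact fun h => hex2 ⟨μ, h⟩
    rw [h1, h2, finsum_mem_empty, finsum_mem_empty]

end
end

section
/- Let λ ⋖ ν be partitions. Then, as an identity of rational numbers, ∏_{c ∈ R_{ν/λ} ∪ C_{ν/λ}} h_λ(c)/h_ν(c) = H_λ / H_ν. -/
open Finset

noncomputable section

lemma covers_diff_singleton {l ν : YoungDiagram} (h : Covers l ν) :
    ∃ d, ν.cells \ l.cells = {d} := by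
  have hcard : (ν.cells \ l.cells).card = 1 := by
    rw [Finset.card_sdiff_of_subset h.1, h.2]; omega
  exact Finset.card_eq_one.mp hcard

lemma rowLen_eq_of_ne {l ν : YoungDiagram} {d : ℕ × ℕ}
    (hsub : l.cells ⊆ ν.cells) (hd : ν.cells \ l.cells = {d}) {i : ℕ} (hi : i ≠ d.1) :
    ν.rowLen i = l.rowLen i := by
  apply le_antisymm
  · by_contra hlt
    push_neg at hlt
    have h1 : (i, l.rowLen i) ∈ ν := YoungDiagram.mem_iff_lt_rowLen.mpr hlt
    have h2 : (i, l.rowLen i) ∉ l := by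
      rw [YoungDiagram.mem_iff_lt_rowLen]; omega
    have hmem : (i, l.rowLen i) ∈ ν.cells \ l.cells := Finset.mem_sdiff.mpr ⟨h1, h2⟩
    rw [hd, Finset.mem_singleton] at hmem
    exact hi (by rw [← hmem])
  · by_contra hlt
    push_neg at hlt
    have h1 : (i, ν.rowLen i) ∈ l := YoungDiagram.mem_iff_lt_rowLen.mpr hlt
    have h2 : (i, ν.rowLen i) ∈ ν := hsub h1
    rw [YoungDiagram.mem_iff_lt_rowLen] at h2
    omega

lemma colLen_eq_of_ne {l ν : YoungDiagram} {d : ℕ × ℕ}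
    (hsub : l.cells ⊆ ν.cells) (hd : ν.cells \ l.cells = {d}) {j : ℕ} (hj : j ≠ d.2) :
    ν.colLen j = l.colLen j := by
  apply le_antisymm
  · by_contra hlt
    push_neg at hlt
    have h1 : (l.colLen j, j) ∈ ν := YoungDiagram.mem_iff_lt_colLen.mpr hlt
    have h2 : (l.colLen j, j) ∉ l := by
      rw [YoungDiagram.mem_iff_lt_colLen]; omega
    have hmem : (l.colLen j, j) ∈ ν.cells \ l.cells := Finset.mem_sdiff.mpr ⟨h1, h2⟩
    rw [hd, Finset.mem_singleton] at hmem
    exact hj (by rw [← hmem])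
  · by_contra hlt
    push_neg at hlt
    have h1 : (ν.colLen j, j) ∈ l := YoungDiagram.mem_iff_lt_colLen.mpr hlt
    have h2 : (ν.colLen j, j) ∈ ν := hsub h1
    rw [YoungDiagram.mem_iff_lt_colLen] at h2
    omega

/-- For `λ ⋖ ν`: `∏_{c ∈ R_{ν/λ} ∪ C_{ν/λ}} h_λ(c)/h_ν(c) = H_λ / H_ν` in `ℚ`, where
`H_κ = ∏_{c∈κ} h_κ(c)`. -/
theorem hook_ratio_product (l ν : YoungDiagram) (h : Covers l ν) :
    ∏ c ∈ Rset l ν ∪ Cset l ν, (hook l c : ℚ) / (hook ν c : ℚ)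
      = (∏ c ∈ l.cells, (hook l c : ℚ)) / (∏ c ∈ ν.cells, (hook ν c : ℚ)) := by
  classical
  obtain ⟨d, hd⟩ := covers_diff_singleton h
  have hsub : l.cells ⊆ ν.cells := h.1
  have hdν : d ∈ ν.cells := by
    have : d ∈ ν.cells \ l.cells := by rw [hd]; exact Finset.mem_singleton_self d
    exact (Finset.mem_sdiff.mp this).1
  have hdl : d ∉ l.cells := by
    have : d ∈ ν.cells \ l.cells := by rw [hd]; exact Finset.mem_singleton_self d
    exact (Finset.mem_sdiff.mp this).2
  have hνcells : ν.cells = insert d l.cells := by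
    ext c
    constructor
    · intro hc
      by_cases hcl : c ∈ l.cells
      · exact Finset.mem_insert_of_mem hcl
      · have : c ∈ ν.cells \ l.cells := Finset.mem_sdiff.mpr ⟨hc, hcl⟩
        rw [hd, Finset.mem_singleton] at this
        rw [this]; exact Finset.mem_insert_self d _
    · intro hc
      rcases Finset.mem_insert.mp hc with rfl | hc
      · exact hdν
      · exact hsub hc
  -- hook ν d = 1
  have hrowd : ν.rowLen d.1 = d.2 + 1 := by
    apply le_antisymm
    · by_contra hlt
      push_neg at hlt
      have h1 : (d.1, d.2 + 1) ∈ ν := YoungDiagram.mem_iff_lt_rowLen.mpr hlt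
      have h2 : (d.1, d.2 + 1) ∉ l.cells := fun hmem =>
        hdl (by simpa using l.up_left_mem le_rfl (Nat.le_succ d.2) (by simpa using hmem))
      have : (d.1, d.2 + 1) ∈ ν.cells \ l.cells := Finset.mem_sdiff.mpr ⟨h1, h2⟩
      rw [hd, Finset.mem_singleton] at this
      have := congrArg Prod.snd this
      simp at this
    · have : d.2 < ν.rowLen d.1 := YoungDiagram.mem_iff_lt_rowLen.mp (by simpa using hdν)
      omega
  have hcold : ν.colLen d.2 = d.1 + 1 := by
    apply le_antisymm
    · by_contra hlt
      push_neg at hlt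
      have h1 : (d.1 + 1, d.2) ∈ ν := YoungDiagram.mem_iff_lt_colLen.mpr hlt
      have h2 : (d.1 + 1, d.2) ∉ l.cells := fun hmem =>
        hdl (by simpa using l.up_left_mem (Nat.le_succ d.1) le_rfl (by simpa using hmem))
      have : (d.1 + 1, d.2) ∈ ν.cells \ l.cells := Finset.mem_sdiff.mpr ⟨h1, h2⟩
      rw [hd, Finset.mem_singleton] at this
      have := congrArg Prod.fst this
      simp at this
    · have : d.1 < ν.colLen d.2 := YoungDiagram.mem_iff_lt_colLen.mp (by simpa using hdν)
      omega
  have hhookd : hook ν d = 1 := by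
    simp [hook, arm, leg, hrowd, hcold]
  -- characterize Rset and Cset membership
  have hRmem : ∀ c, c ∈ Rset l ν ↔ c ∈ l.cells ∧ c.1 = d.1 := by
    intro c
    simp only [Rset, Finset.mem_filter, hd, Finset.mem_singleton]
    constructor
    · rintro ⟨hc, e, rfl, he⟩; exact ⟨hc, he⟩
    · rintro ⟨hc, he⟩; exact ⟨hc, d, rfl, he⟩
  have hCmem : ∀ c, c ∈ Cset l ν ↔ c ∈ l.cells ∧ c.2 = d.2 := by
    intro c
    simp only [Cset, Finset.mem_filter, hd, Finset.mem_singleton]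
    constructor
    · rintro ⟨hc, e, rfl, he⟩; exact ⟨hc, he⟩
    · rintro ⟨hc, he⟩; exact ⟨hc, d, rfl, he⟩
  set S := Rset l ν ∪ Cset l ν with hS
  have hSsub : S ⊆ l.cells := by
    intro c hc
    rcases Finset.mem_union.mp hc with hc | hc
    · exact ((hRmem c).mp hc).1
    · exact ((hCmem c).mp hc).1
  -- hooks agree off S
  have hoff : ∀ c ∈ l.cells \ S, (hook ν c : ℚ) = (hook l c : ℚ) := by
    intro c hc
    obtain ⟨hcl, hcS⟩ := Finset.mem_sdiff.mp hc
    rw [hS, Finset.mem_union, not_or, hRmem, hCmem] at hcS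
    have h1 : c.1 ≠ d.1 := fun he => hcS.1 ⟨hcl, he⟩
    have h2 : c.2 ≠ d.2 := fun he => hcS.2 ⟨hcl, he⟩
    have hr := rowLen_eq_of_ne hsub hd h1
    have hcl' := colLen_eq_of_ne hsub hd h2
    simp [hook, arm, leg, hr, hcl']
  have hne : ∀ (κ : YoungDiagram) (c : ℕ × ℕ), (hook κ c : ℚ) ≠ 0 := by
    intro κ c
    simp [hook]
    positivity
  -- split products
  have hsplitν : ∏ c ∈ ν.cells, (hook ν c : ℚ)
      = (∏ c ∈ S, (hook ν c : ℚ)) * ∏ c ∈ l.cells \ S, (hook ν c : ℚ) := by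
    rw [hνcells, Finset.prod_insert hdl, hhookd,
      ← Finset.prod_sdiff hSsub, Nat.cast_one, one_mul, mul_comm]
  have hsplitl : ∏ c ∈ l.cells, (hook l c : ℚ)
      = (∏ c ∈ S, (hook l c : ℚ)) * ∏ c ∈ l.cells \ S, (hook l c : ℚ) := by
    rw [← Finset.prod_sdiff hSsub, mul_comm]
  rw [hsplitν, hsplitl, Finset.prod_congr rfl hoff]
  rw [mul_div_mul_right _ _ (Finset.prod_ne_zero_iff.mpr fun c _ => hne l c)]
  rw [Finset.prod_div_distrib]

end
end

section
/- Let λ be a partition, μ ∈ D(λ) and ν ∈ U(λ). Then h_λ(c_{μ,ν}) = |n'(λ/μ) − n'(ν/λ) + n(ν/λ) − n(λ/μ)|, where n'(λ/μ)=n'(λ)−n'(μ), n'(ν/λ)=n'(ν)−n'(λ), n(ν/λ)=n(ν)−n(λ), and n(λ/μ)=n(λ)−n(μ). -/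
open Finset

noncomputable section

lemma cells_insert {μ l : YoungDiagram} (h : Covers μ l) {c : ℕ × ℕ}
    (hc : c ∈ l.cells \ μ.cells) : l.cells = insert c μ.cells := by
  rw [Finset.mem_sdiff] at hc
  refine (Finset.eq_of_subset_of_card_le ?_ ?_).symm
  · intro x hx
    rcases Finset.mem_insert.mp hx with rfl | hx
    · exact hc.1
    · exact h.1 hx
  · rw [Finset.card_insert_of_notMem hc.2, h.2]

lemma rowLen_small {μ l : YoungDiagram} (h : Covers μ l) {c : ℕ × ℕ}
    (hc : c ∈ l.cells \ μ.cells) : μ.rowLen c.1 = c.2 := by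
  have hins := cells_insert h hc
  rw [Finset.mem_sdiff] at hc
  have hle : μ.rowLen c.1 ≤ c.2 := by
    by_contra hlt
    exact hc.2 (by simpa using YoungDiagram.mem_iff_lt_rowLen.mpr (by omega))
  rcases Nat.eq_zero_or_pos c.2 with h0 | h0
  · omega
  · have : (c.1, c.2 - 1) ∈ μ := by
      have hl : (c.1, c.2 - 1) ∈ l.cells :=
        (YoungDiagram.mem_cells _).mpr (l.up_left_mem le_rfl (by omega)
          ((YoungDiagram.mem_cells _).mp hc.1))
      rw [hins, Finset.mem_insert] at hl
      rcases hl with heq | hl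
      · exfalso; have := congrArg Prod.snd heq; simp at this; omega
      · exact (YoungDiagram.mem_cells _).mp hl
    have := YoungDiagram.mem_iff_lt_rowLen.mp this
    omega

lemma rowLen_big {μ l : YoungDiagram} (h : Covers μ l) {c : ℕ × ℕ}
    (hc : c ∈ l.cells \ μ.cells) : l.rowLen c.1 = c.2 + 1 := by
  have hins := cells_insert h hc
  rw [Finset.mem_sdiff] at hc
  have h1 : c.2 < l.rowLen c.1 :=
    YoungDiagram.mem_iff_lt_rowLen.mp (by simpa using (YoungDiagram.mem_cells c).mp hc.1)
  have h2 : (c.1, c.2 + 1) ∉ l := by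
    intro hmem
    have : (c.1, c.2 + 1) ∈ l.cells := (YoungDiagram.mem_cells _).mpr hmem
    rw [hins, Finset.mem_insert] at this
    rcases this with heq | hmu
    · have := congrArg Prod.snd heq; simp at this
    · exact hc.2 ((YoungDiagram.mem_cells _).mpr
        (μ.up_left_mem le_rfl (by omega) ((YoungDiagram.mem_cells _).mp hmu)))
  have := YoungDiagram.mem_iff_lt_rowLen.not.mp h2
  omega

lemma rowLen_other {μ l : YoungDiagram} (h : Covers μ l) {c : ℕ × ℕ}
    (hc : c ∈ l.cells \ μ.cells) {r : ℕ} (hr : r ≠ c.1) : l.rowLen r = μ.rowLen r := by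
  have hins := cells_insert h hc
  refine le_antisymm ?_ ?_
  · by_contra hlt
    have : (r, μ.rowLen r) ∈ l := YoungDiagram.mem_iff_lt_rowLen.mpr (by omega)
    have : (r, μ.rowLen r) ∈ l.cells := (YoungDiagram.mem_cells _).mpr this
    rw [hins, Finset.mem_insert] at this
    rcases this with heq | hmu
    · exact hr (congrArg Prod.fst heq)
    · have := YoungDiagram.mem_iff_lt_rowLen.mp ((YoungDiagram.mem_cells _).mp hmu)
      omega
  · by_contra hlt
    have : (r, l.rowLen r) ∈ μ := YoungDiagram.mem_iff_lt_rowLen.mpr (by omega)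
    have := YoungDiagram.mem_iff_lt_rowLen.mp
      ((YoungDiagram.mem_cells _).mp (h.1 ((YoungDiagram.mem_cells _).mpr this)))
    omega

lemma nstat'_diff {μ l : YoungDiagram} (h : Covers μ l) {c : ℕ × ℕ}
    (hc : c ∈ l.cells \ μ.cells) : nstat' l - nstat' μ = c.2 := by
  classical
  have hins := cells_insert h hc
  have hcnot : c ∉ μ.cells := (Finset.mem_sdiff.mp hc).2
  have hsmall := rowLen_small h hc
  have hbig := rowLen_big h hc
  have key : ∀ x ∈ μ.cells, (arm l x : ℤ) = (arm μ x : ℤ) + (if x.1 = c.1 then 1 else 0) := by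
    intro x hx
    have hxmu : x.2 < μ.rowLen x.1 :=
      YoungDiagram.mem_iff_lt_rowLen.mp (by simpa using (YoungDiagram.mem_cells x).mp hx)
    by_cases hr : x.1 = c.1
    · have hll : l.rowLen x.1 = μ.rowLen x.1 + 1 := by rw [hr, hbig, hsmall]
      rw [if_pos hr]
      simp only [arm]
      omega
    · have hll := rowLen_other h hc hr
      rw [if_neg hr]
      simp only [arm, hll]
      omega
  have harmc : (arm l c : ℤ) = 0 := by simp [arm, hbig]
  have hsum : nstat' l = (arm l c : ℤ) + ∑ x ∈ μ.cells, (arm l x : ℤ) := by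
    rw [nstat', hins, Finset.sum_insert hcnot]
  rw [hsum, harmc, Finset.sum_congr rfl key, Finset.sum_add_distrib]
  have : ∑ x ∈ μ.cells, (if x.1 = c.1 then (1:ℤ) else 0) = (μ.row c.1).card := by
    rw [Finset.sum_boole]
    rfl
  rw [this, ← YoungDiagram.rowLen_eq_card, hsmall, nstat']
  ring

lemma covers'_transpose {μ l : YoungDiagram} (h : Covers μ l) :
    Covers μ.transpose l.transpose := by
  constructor
  · exact YoungDiagram.cells_subset_iff.mpr (YoungDiagram.transpose_mono
      (YoungDiagram.cells_subset_iff.mp h.1))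
  · have h1 : l.transpose.cells.card = l.cells.card := Finset.card_map _
    have h2 : μ.transpose.cells.card = μ.cells.card := Finset.card_map _
    rw [h1, h2, h.2]

lemma nstat_eq_transpose (κ : YoungDiagram) : nstat κ = nstat' κ.transpose := by
  rw [nstat, nstat']
  rw [show κ.transpose.cells = κ.cells.map ⟨Prod.swap, Prod.swap_injective⟩ from rfl]
  rw [Finset.sum_map]
  refine Finset.sum_congr rfl fun x hx => ?_
  simp only [Function.Embedding.coeFn_mk, arm, leg]
  rw [show (Prod.swap x).1 = x.2 from rfl, show (Prod.swap x).2 = x.1 from rfl,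
    YoungDiagram.rowLen_transpose]

lemma nstat_diff {μ l : YoungDiagram} (h : Covers μ l) {c : ℕ × ℕ}
    (hc : c ∈ l.cells \ μ.cells) : nstat l - nstat μ = c.1 := by
  rw [nstat_eq_transpose, nstat_eq_transpose]
  have hc' : c.swap ∈ l.transpose.cells \ μ.transpose.cells := by
    rw [Finset.mem_sdiff] at hc ⊢
    constructor
    · rw [YoungDiagram.mem_cells, YoungDiagram.mem_transpose, Prod.swap_swap,
        ← YoungDiagram.mem_cells]; exact hc.1
    · rw [YoungDiagram.mem_cells, YoungDiagram.mem_transpose, Prod.swap_swap,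
        ← YoungDiagram.mem_cells]; exact hc.2
  have := nstat'_diff (covers'_transpose h) hc'
  simpa using this

lemma colLen_small {μ l : YoungDiagram} (h : Covers μ l) {c : ℕ × ℕ}
    (hc : c ∈ l.cells \ μ.cells) : μ.colLen c.2 = c.1 := by
  have hc' : c.swap ∈ l.transpose.cells \ μ.transpose.cells := by
    rw [Finset.mem_sdiff] at hc ⊢
    simp only [YoungDiagram.mem_cells, YoungDiagram.mem_transpose, Prod.swap_swap]
    exact ⟨hc.1, hc.2⟩
  have := rowLen_small (covers'_transpose h) hc'
  rwa [YoungDiagram.rowLen_transpose] at this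

lemma colLen_big {μ l : YoungDiagram} (h : Covers μ l) {c : ℕ × ℕ}
    (hc : c ∈ l.cells \ μ.cells) : l.colLen c.2 = c.1 + 1 := by
  have hc' : c.swap ∈ l.transpose.cells \ μ.transpose.cells := by
    rw [Finset.mem_sdiff] at hc ⊢
    simp only [YoungDiagram.mem_cells, YoungDiagram.mem_transpose, Prod.swap_swap]
    exact ⟨hc.1, hc.2⟩
  have := rowLen_big (covers'_transpose h) hc'
  rwa [YoungDiagram.rowLen_transpose] at this

/-- For `μ ∈ D(λ)`, `ν ∈ U(λ)`, with `c₁` the unique cell of `ν/λ` and `c₂` the unique cell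
of `λ/μ` (cells as `(row, col)`; the Cartesian coordinates of the paper are
`(i,j) = (col+1, row+1)`), the cell `c_{μ,ν}` is `(c₂.row, c₁.col)` if `c₁.col ≤ c₂.col` and
`(c₁.row, c₂.col)` otherwise, and its hook-length in `λ` is
`|n'(λ/μ) − n'(ν/λ) + n(ν/λ) − n(λ/μ)|`. -/
theorem hook_c_mu_nu (μ l ν : YoungDiagram) (h₁ : Covers μ l) (h₂ : Covers l ν)
    (c₁ c₂ : ℕ × ℕ) (hc₁ : c₁ ∈ ν.cells \ l.cells) (hc₂ : c₂ ∈ l.cells \ μ.cells) :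
    (hook l (if c₁.2 ≤ c₂.2 then (c₂.1, c₁.2) else (c₁.1, c₂.2)) : ℤ)
      = |(nstat' l - nstat' μ) - (nstat' ν - nstat' l)
          + (nstat ν - nstat l) - (nstat l - nstat μ)| := by
  have hA := nstat'_diff h₁ hc₂
  have hB := nstat'_diff h₂ hc₁
  have hC := nstat_diff h₂ hc₁
  have hD := nstat_diff h₁ hc₂
  rw [hA, hB, hC, hD]
  have hr2 : l.rowLen c₂.1 = c₂.2 + 1 := rowLen_big h₁ hc₂
  have hcol2 : l.colLen c₂.2 = c₂.1 + 1 := colLen_big h₁ hc₂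
  have hr1 : l.rowLen c₁.1 = c₁.2 := rowLen_small h₂ hc₁
  have hcol1 : l.colLen c₁.2 = c₁.1 := colLen_small h₂ hc₁
  have hc₂l : c₂ ∈ l := (YoungDiagram.mem_cells c₂).mp (Finset.mem_sdiff.mp hc₂).1
  by_cases hcase : c₁.2 ≤ c₂.2
  · rw [if_pos hcase]
    have hmem : (c₂.1, c₁.2) ∈ l := l.up_left_mem le_rfl hcase (by
      have : ((c₂.1 : ℕ), (c₂.2 : ℕ)) = c₂ := rfl
      rw [this]; exact hc₂l)
    have hlt : c₂.1 < l.colLen c₁.2 := YoungDiagram.mem_iff_lt_colLen.mp hmem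
    simp only [hook, arm, leg]
    rcases abs_cases ((c₂.2 : ℤ) - ↑c₁.2 + ↑c₁.1 - ↑c₂.1) with ⟨he, _⟩ | ⟨he, _⟩ <;>
      rw [he] <;> omega
  · rw [if_neg hcase]
    have hmem : (c₁.1, c₂.2) ∈ l := YoungDiagram.mem_iff_lt_rowLen.mpr (by omega)
    have hlt : c₁.1 < l.colLen c₂.2 := YoungDiagram.mem_iff_lt_colLen.mp hmem
    simp only [hook, arm, leg]
    rcases abs_cases ((c₂.2 : ℤ) - ↑c₁.2 + ↑c₁.1 - ↑c₂.1) with ⟨he, _⟩ | ⟨he, _⟩ <;>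
      rw [he] <;> omega

end
end

section
/- Let λ ⋖ ν be partitions and let ι be the field endomorphism of ℚ(q,t) sending q ↦ q^{−1} and t ↦ t^{−1}. Then ι(α_{ν/λ}(q,t)) = q^{n'(ν/λ)} t^{n(ν/λ)} · α_{ν/λ}(q,t) and ι(ᾱ_{ν/λ}(q,t)) = q^{n'(ν/λ)} t^{n(ν/λ)} · ᾱ_{ν/λ}(q,t). -/
open Finset

noncomputable section

/-
Inverting `q` and `t` sends `[i,j]` to `-(q^i t^j)⁻¹ [i,j]`, so each factor `[a,b]/[a',b']` of
`α` and `ᾱ` is multiplied by the monomial `q^{a'-a} t^{b'-b}`. Adding the cell `d` of `ν/λ`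
raises the arm of exactly the cells of `R_{ν/λ}` and the leg of exactly those of `C_{ν/λ}`
by one, so every factor over `R` picks up a `q`, every factor over `C` a `t`, and
`n'(ν/λ) = |R_{ν/λ}|`, `n(ν/λ) = |C_{ν/λ}|` (the new cell itself has arm and leg `0`).
-/

lemma q_ne_zero : q ≠ 0 :=
  (map_ne_zero_iff _ (IsFractionRing.injective _ K)).mpr (MvPolynomial.X_ne_zero 0)

lemma t_ne_zero : t ≠ 0 :=
  (map_ne_zero_iff _ (IsFractionRing.injective _ K)).mpr (MvPolynomial.X_ne_zero 1)

lemma map_prod_eq_pow_card_mul {α R : Type*} [CommSemiring R] (σ : R →+* R) (s : Finset α)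
    (f : α → R) (u : R) (h : ∀ c ∈ s, σ (f c) = u * f c) :
    σ (∏ c ∈ s, f c) = u ^ #s * ∏ c ∈ s, f c := by
  rw [map_prod, prod_congr rfl h, prod_mul_distrib, prod_const]

section Inversion

variable {ι : K →+* K}

lemma map_brk (hq : ι q = q⁻¹) (ht : ι t = t⁻¹) (i j : ℕ) :
    ι (brk i j) = -(q ^ i * t ^ j)⁻¹ * brk i j := by
  have := q_ne_zero
  have := t_ne_zero
  simp only [brk, map_sub, map_one, map_mul, map_pow, hq, ht, inv_pow]
  field_simp
  ring

lemma map_brk_div_brk (hq : ι q = q⁻¹) (ht : ι t = t⁻¹) (a b a' b' : ℕ) :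
    ι (brk a b / brk a' b') = q ^ a' * t ^ b' / (q ^ a * t ^ b) * (brk a b / brk a' b') := by
  rw [map_div₀, map_brk hq ht, map_brk hq ht, neg_mul, neg_mul, neg_div_neg_eq,
    mul_div_mul_comm, inv_div_inv]

lemma map_brk_div_brk_succ_left (hq : ι q = q⁻¹) (ht : ι t = t⁻¹) (i j : ℕ) :
    ι (brk i j / brk (i + 1) j) = q * (brk i j / brk (i + 1) j) := by
  have := q_ne_zero
  have := t_ne_zero
  rw [map_brk_div_brk hq ht]
  congr 1
  field_simp
  ring

lemma map_brk_div_brk_succ_right (hq : ι q = q⁻¹) (ht : ι t = t⁻¹) (i j : ℕ) :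
    ι (brk i j / brk i (j + 1)) = t * (brk i j / brk i (j + 1)) := by
  have := q_ne_zero
  have := t_ne_zero
  rw [map_brk_div_brk hq ht]
  congr 1
  field_simp
  ring

end Inversion

namespace YoungDiagram

variable {l ν : YoungDiagram} {d : ℕ × ℕ}

lemma rowLen_eq_of_cells_eq_insert (hd : d ∉ l) (hν : ν.cells = insert d l.cells) (i : ℕ) :
    ν.rowLen i = l.rowLen i + if i = d.1 then 1 else 0 := by
  have hd' : d ∉ l.row i := fun h => hd (mem_row_iff.mp h).1
  simp only [rowLen_eq_card, row, hν, filter_insert] at hd' ⊢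
  split_ifs with h₁ h₂ h₂
  · rw [card_insert_of_notMem hd']
  · exact absurd h₁.symm h₂
  · exact absurd h₂.symm h₁
  · rfl

lemma colLen_eq_of_cells_eq_insert (hd : d ∉ l) (hν : ν.cells = insert d l.cells) (j : ℕ) :
    ν.colLen j = l.colLen j + if j = d.2 then 1 else 0 := by
  have hd' : d ∉ l.col j := fun h => hd (mem_col_iff.mp h).1
  simp only [colLen_eq_card, col, hν, filter_insert] at hd' ⊢
  split_ifs with h₁ h₂ h₂
  · rw [card_insert_of_notMem hd']
  · exact absurd h₁.symm h₂
  · exact absurd h₂.symm h₁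
  · rfl

lemma rowLen_eq_succ_of_cells_eq_insert (hd : d ∉ l) (hν : ν.cells = insert d l.cells) :
    ν.rowLen d.1 = d.2 + 1 := by
  have hdν : d.2 < ν.rowLen d.1 :=
    mem_iff_lt_rowLen.mp ((mem_cells d).mp (hν ▸ mem_insert_self d _))
  have hdl : ¬d.2 < l.rowLen d.1 := mt mem_iff_lt_rowLen.mpr hd
  rw [rowLen_eq_of_cells_eq_insert hd hν, if_pos rfl] at hdν ⊢
  omega

lemma colLen_eq_succ_of_cells_eq_insert (hd : d ∉ l) (hν : ν.cells = insert d l.cells) :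
    ν.colLen d.2 = d.1 + 1 := by
  have hdν : d.1 < ν.colLen d.2 :=
    mem_iff_lt_colLen.mp ((mem_cells d).mp (hν ▸ mem_insert_self d _))
  have hdl : ¬d.1 < l.colLen d.2 := mt mem_iff_lt_colLen.mpr hd
  rw [colLen_eq_of_cells_eq_insert hd hν, if_pos rfl] at hdν ⊢
  omega

end YoungDiagram

open YoungDiagram

section AddCell

variable {l ν : YoungDiagram} {d c : ℕ × ℕ}

lemma Covers.exists_cells_eq_insert (h : Covers l ν) :
    ∃ d ∉ l, ν.cells = insert d l.cells := by
  obtain ⟨hsub, hcard⟩ := h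
  obtain ⟨d, hd⟩ : ∃ d, ν.cells \ l.cells = {d} := by
    rw [← card_eq_one, card_sdiff_of_subset hsub, hcard, Nat.add_sub_cancel_left]
  have hdν : d ∈ ν.cells \ l.cells := hd ▸ mem_singleton_self d
  refine ⟨d, fun hdl => (mem_sdiff.mp hdν).2 ((mem_cells d).mpr hdl), ?_⟩
  rw [← union_sdiff_of_subset hsub, hd, union_singleton]

lemma arm_eq_zero_of_cells_eq_insert (hd : d ∉ l) (hν : ν.cells = insert d l.cells) :
    arm ν d = 0 := by
  simp [arm, rowLen_eq_succ_of_cells_eq_insert hd hν]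

lemma leg_eq_zero_of_cells_eq_insert (hd : d ∉ l) (hν : ν.cells = insert d l.cells) :
    leg ν d = 0 := by
  simp [leg, colLen_eq_succ_of_cells_eq_insert hd hν]

lemma arm_eq_of_cells_eq_insert (hd : d ∉ l) (hν : ν.cells = insert d l.cells) (hc : c ∈ l) :
    arm ν c = arm l c + if c.1 = d.1 then 1 else 0 := by
  have := mem_iff_lt_rowLen.mp hc
  simp only [arm, rowLen_eq_of_cells_eq_insert hd hν]
  split_ifs <;> omega

lemma leg_eq_of_cells_eq_insert (hd : d ∉ l) (hν : ν.cells = insert d l.cells) (hc : c ∈ l) :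
    leg ν c = leg l c + if c.2 = d.2 then 1 else 0 := by
  have := mem_iff_lt_colLen.mp hc
  simp only [leg, colLen_eq_of_cells_eq_insert hd hν]
  split_ifs <;> omega

lemma cells_sdiff_eq_singleton_of_cells_eq_insert (hd : d ∉ l)
    (hν : ν.cells = insert d l.cells) : ν.cells \ l.cells = {d} := by
  rw [hν, insert_sdiff_of_notMem _ ((mem_cells d).not.mpr hd), Finset.sdiff_self, insert_empty]

lemma Rset_eq_filter_of_cells_eq_insert (hd : d ∉ l) (hν : ν.cells = insert d l.cells) :
    Rset l ν = l.cells.filter (·.1 = d.1) := by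
  simp [Rset, cells_sdiff_eq_singleton_of_cells_eq_insert hd hν]

lemma Cset_eq_filter_of_cells_eq_insert (hd : d ∉ l) (hν : ν.cells = insert d l.cells) :
    Cset l ν = l.cells.filter (·.2 = d.2) := by
  simp [Cset, cells_sdiff_eq_singleton_of_cells_eq_insert hd hν]

end AddCell

section Covers

variable {l ν : YoungDiagram} {c : ℕ × ℕ}

lemma nstat'_sub_eq_card_Rset (h : Covers l ν) : nstat' ν - nstat' l = #(Rset l ν) := by
  obtain ⟨d, hd, hν⟩ := h.exists_cells_eq_insert
  rw [nstat', nstat', hν, sum_insert ((mem_cells d).not.mpr hd),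
    arm_eq_zero_of_cells_eq_insert hd hν,
    sum_congr rfl fun c hc => congrArg Nat.cast
      (arm_eq_of_cells_eq_insert hd hν ((mem_cells c).mp hc)),
    Rset_eq_filter_of_cells_eq_insert hd hν, card_filter]
  push_cast
  rw [sum_add_distrib]
  ring

lemma nstat_sub_eq_card_Cset (h : Covers l ν) : nstat ν - nstat l = #(Cset l ν) := by
  obtain ⟨d, hd, hν⟩ := h.exists_cells_eq_insert
  rw [nstat, nstat, hν, sum_insert ((mem_cells d).not.mpr hd),
    leg_eq_zero_of_cells_eq_insert hd hν,
    sum_congr rfl fun c hc => congrArg Nat.cast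
      (leg_eq_of_cells_eq_insert hd hν ((mem_cells c).mp hc)),
    Cset_eq_filter_of_cells_eq_insert hd hν, card_filter]
  push_cast
  rw [sum_add_distrib]
  ring

lemma arm_leg_of_mem_Rset (h : Covers l ν) (hc : c ∈ Rset l ν) :
    arm ν c = arm l c + 1 ∧ leg ν c = leg l c := by
  obtain ⟨d, hd, hν⟩ := h.exists_cells_eq_insert
  rw [Rset_eq_filter_of_cells_eq_insert hd hν, mem_filter, mem_cells] at hc
  obtain ⟨hcl, hrow⟩ := hc
  have hcol : c.2 ≠ d.2 := fun hcol => hd (Prod.ext hrow hcol ▸ hcl)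
  rw [arm_eq_of_cells_eq_insert hd hν hcl, leg_eq_of_cells_eq_insert hd hν hcl,
    if_pos hrow, if_neg hcol]
  exact ⟨rfl, rfl⟩

lemma arm_leg_of_mem_Cset (h : Covers l ν) (hc : c ∈ Cset l ν) :
    arm ν c = arm l c ∧ leg ν c = leg l c + 1 := by
  obtain ⟨d, hd, hν⟩ := h.exists_cells_eq_insert
  rw [Cset_eq_filter_of_cells_eq_insert hd hν, mem_filter, mem_cells] at hc
  obtain ⟨hcl, hcol⟩ := hc
  have hrow : c.1 ≠ d.1 := fun hrow => hd (Prod.ext hrow hcol ▸ hcl)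
  rw [arm_eq_of_cells_eq_insert hd hν hcl, leg_eq_of_cells_eq_insert hd hν hcl,
    if_neg hrow, if_pos hcol]
  exact ⟨rfl, rfl⟩

variable {ι : K →+* K}

lemma map_alph (hq : ι q = q⁻¹) (ht : ι t = t⁻¹) (h : Covers l ν) :
    ι (alph l ν) = q ^ #(Rset l ν) * t ^ #(Cset l ν) * alph l ν := by
  rw [alph, map_mul, map_prod_eq_pow_card_mul ι _ _ q, map_prod_eq_pow_card_mul ι _ _ t]
  · ring
  · intro c hc
    obtain ⟨harm, hleg⟩ := arm_leg_of_mem_Cset h hc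
    rw [harm, hleg]
    exact map_brk_div_brk_succ_right hq ht _ _
  · intro c hc
    obtain ⟨harm, hleg⟩ := arm_leg_of_mem_Rset h hc
    rw [harm, hleg]
    exact map_brk_div_brk_succ_left hq ht _ _

lemma map_alphBar (hq : ι q = q⁻¹) (ht : ι t = t⁻¹) (h : Covers l ν) :
    ι (alphBar l ν) = q ^ #(Rset l ν) * t ^ #(Cset l ν) * alphBar l ν := by
  rw [alphBar, map_mul, map_prod_eq_pow_card_mul ι _ _ q, map_prod_eq_pow_card_mul ι _ _ t]
  · ring
  · intro c hc
    obtain ⟨harm, hleg⟩ := arm_leg_of_mem_Cset h hc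
    rw [harm, hleg]
    exact map_brk_div_brk_succ_right hq ht _ _
  · intro c hc
    obtain ⟨harm, hleg⟩ := arm_leg_of_mem_Rset h hc
    rw [harm, hleg]
    exact map_brk_div_brk_succ_left hq ht _ _

end Covers

/-- Inversion symmetry: if `ι` is the field endomorphism of `ℚ(q,t)` with `ι q = q⁻¹` and
`ι t = t⁻¹` (any ring homomorphism with these values — there is exactly one), then
`ι(α_{ν/λ}) = q^{n'(ν/λ)} t^{n(ν/λ)} α_{ν/λ}` and
`ι(ᾱ_{ν/λ}) = q^{n'(ν/λ)} t^{n(ν/λ)} ᾱ_{ν/λ}`. -/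
theorem alpha_inversion_symmetry (l ν : YoungDiagram) (h : Covers l ν)
    (ι : K →+* K) (hq : ι q = q⁻¹) (ht : ι t = t⁻¹) :
    ι (alph l ν) = q ^ (nstat' ν - nstat' l) * t ^ (nstat ν - nstat l) * alph l ν ∧
    ι (alphBar l ν) = q ^ (nstat' ν - nstat' l) * t ^ (nstat ν - nstat l) * alphBar l ν := by
  rw [nstat'_sub_eq_card_Rset h, nstat_sub_eq_card_Cset h, zpow_natCast, zpow_natCast]
  exact ⟨map_alph hq ht h, map_alphBar hq ht h⟩

end
end

section
/- For every partition λ, the identity ∑_{ν ∈ U(λ)} q^{n(ν)} / H_ν(q) = (1/(1−q)) · q^{n(λ)} / H_λ(q) holds in the field ℚ(q) of rational functions in one variable q over ℚ. -/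
open Finset

noncomputable section

/-- The `q`-hook product `H_κ(q) = ∏_{c∈κ} (1 − q^{h_κ(c)})` in `ℚ(q) = RatFunc ℚ`. -/
def Hq (κ : YoungDiagram) : RatFunc ℚ := ∏ c ∈ κ.cells, (1 - RatFunc.X ^ hook κ c)


/-!
Let `β_i = λ_i + M - i` (`0 ≤ i ≤ M`, `M ≥ ℓ(λ)`) be the β-numbers of `λ` and `x_i = q^{β_i}`.
The hooks of row `r` together with the differences `β_r - β_i` (`i > r`) are exactly
`1, …, β_r`; hence `H_λ(q)` times the Vandermonde product `∏_{i<j} (x_j - x_i)` equals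
`q^{∑ i β_i} ∏_i (q;q)_{β_i}`. Adding a cell in row `r` raises `β_r` by one, i.e. replaces `x_r`
by `q x_r`, so the summand of `ν` is that of `λ` times
`c_r = (1 - q x_r)⁻¹ ∏_{j ≠ r} (x_j - q x_r) / (x_j - x_r)`, and `c_r = 0` when row `r` is not
addable, because then `x_{r-1} = q x_r`. Finally `∑_r c_r = 1/(1-q)`: this is the vanishing of
the top coefficient of the Lagrange interpolant of `∏_j (q z - x_j)` at the nodes
`0, q⁻¹, x_0, …, x_M`, where the node `q⁻¹` contributes nothing because `x_M = 1`.
-/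

section PartialFractions

open Polynomial

variable {F : Type*} [Field F]

theorem sum_eval_div_prod_sub_eq_zero [DecidableEq F] (S : Finset F) {P : F[X]}
    (hP : P.natDegree + 1 < #S) : ∑ a ∈ S, P.eval a / ∏ b ∈ S.erase a, (a - b) = 0 := by
  have hdeg : P.degree < #S :=
    degree_le_natDegree.trans_lt (by exact_mod_cast (Nat.lt_succ_self _).trans hP)
  rw [← coeff_eq_zero_of_natDegree_lt (by omega : P.natDegree < #S - 1)]
  exact (Lagrange.coeff_eq_sum (v := id) (Set.injOn_id _) hdeg).symm

variable {ι : Type*} [DecidableEq ι] {s : Finset ι} {x : ι → F} {q : F} {r : ι}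

def pieriCoeff (s : Finset ι) (x : ι → F) (q : F) (r : ι) : F :=
  (1 - q * x r)⁻¹ * ∏ j ∈ s.erase r, (x j - q * x r) / (x j - x r)

theorem pieriCoeff_eq_zero {j : ι} (hj : j ∈ s) (hjr : j ≠ r) (hxj : x j = q * x r) :
    pieriCoeff s x q r = 0 :=
  mul_eq_zero_of_right _ (prod_eq_zero (mem_erase.mpr ⟨hjr, hj⟩) (by rw [hxj, sub_self, zero_div]))

theorem mul_pieriCoeff_eq (hx : Set.InjOn x s) (hr : r ∈ s) (hxr : x r ≠ 0)
    (hqxr : q * x r ≠ 1) (hq : q ≠ 0) :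
    q * (1 - q) * pieriCoeff s x q r = (∏ j ∈ s, (q * x r - x j)) /
      ((x r - 0) * ((x r - q⁻¹) * ∏ j ∈ s.erase r, (x r - x j))) := by
  have hflip : ∏ j ∈ s.erase r, (x j - q * x r) / (x j - x r)
      = (∏ j ∈ s.erase r, (q * x r - x j)) / ∏ j ∈ s.erase r, (x r - x j) := by
    rw [← prod_div_distrib]
    exact prod_congr rfl fun j _ => by rw [← neg_sub, ← neg_sub (x r), neg_div_neg_eq]
  have hdist : ∏ j ∈ s.erase r, (x r - x j) ≠ 0 := prod_ne_zero_iff.mpr fun j hj =>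
    sub_ne_zero.mpr fun h => ne_of_mem_erase hj (hx (mem_of_mem_erase hj) hr h.symm)
  have h₁ : 1 - q * x r ≠ 0 := sub_ne_zero.mpr hqxr.symm
  have h₂ : q * x r - 1 ≠ 0 := sub_ne_zero.mpr hqxr
  rw [pieriCoeff, hflip, ← mul_prod_erase s _ hr, show x r - q⁻¹ = (q * x r - 1) / q by field_simp]
  field_simp
  ring

theorem prod_erase_insert_insert_image {α M : Type*} [DecidableEq α] [CommMonoid M]
    {x : ι → α} {a c : α} (hx : Set.InjOn x s) (hr : r ∈ s) (ha : a ∉ insert c (s.image x))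
    (hc : c ∉ s.image x) (f : α → M) :
    ∏ b ∈ (insert a (insert c (s.image x))).erase (x r), f b =
      f a * (f c * ∏ j ∈ s.erase r, f (x j)) := by
  have hxr : x r ∈ s.image x := mem_image_of_mem x hr
  have hsub : (s.erase r).image x ⊆ s.image x := image_subset_image (erase_subset r s)
  rw [erase_insert_of_ne fun h => ha (by rw [h]; exact mem_insert_of_mem hxr),
    erase_insert_of_ne fun h => hc (by rw [h]; exact hxr), ← sdiff_singleton_eq_erase,
    ← image_singleton, ← image_sdiff_of_injOn hx (by simpa), sdiff_singleton_eq_erase,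
    prod_insert fun h => ha (insert_subset_insert _ hsub h), prod_insert fun h => hc (hsub h),
    prod_image (hx.mono (by simp))]

theorem sum_pieriCoeff (hx : Set.InjOn x s) (hx₀ : ∀ i ∈ s, x i ≠ 0)
    (hqx : ∀ i ∈ s, q * x i ≠ 1) (hx₁ : ∃ i ∈ s, x i = 1) (hq : q ≠ 0) :
    ∑ r ∈ s, pieriCoeff s x q r = (1 - q)⁻¹ := by
  classical
  obtain ⟨i₁, hi₁, hxi₁⟩ := hx₁
  have h0 : (0 : F) ∉ insert q⁻¹ (s.image x) := by simpa [eq_comm, hq] using hx₀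
  have hqinv : q⁻¹ ∉ s.image x := by
    simp only [mem_image, not_exists, not_and]
    exact fun i hi h => hqx i hi (by rw [h, mul_inv_cancel₀ hq])
  set S := insert 0 (insert q⁻¹ (s.image x))
  set P : F[X] := ∏ j ∈ s, (C q * X - C (x j))
  have hPdeg : P.natDegree ≤ #s := by
    refine (natDegree_prod_le _ _).trans ((sum_le_card_nsmul _ _ 1 fun j _ => ?_).trans (by simp))
    exact natDegree_sub_C.trans_le ((natDegree_C_mul_le _ _).trans natDegree_X_le)
  have hS : #S = #s + 2 := by
    rw [card_insert_of_notMem h0, card_insert_of_notMem hqinv, card_image_of_injOn hx]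
  have hPeval (z : F) : P.eval z = ∏ j ∈ s, (q * z - x j) := by simp [P, eval_prod]
  have hzero : P.eval 0 / ∏ b ∈ S.erase 0, (0 - b) = -q := by
    rw [erase_insert h0, prod_insert hqinv, prod_image hx, hPeval]
    simp only [mul_zero, zero_sub]
    rw [div_mul_cancel_right₀ (prod_ne_zero_iff.mpr fun i hi => neg_ne_zero.mpr (hx₀ i hi)),
      inv_neg, inv_inv]
  have hpole : P.eval q⁻¹ = 0 := by
    rw [hPeval]
    exact prod_eq_zero hi₁ (by rw [hxi₁, mul_inv_cancel₀ hq, sub_self])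
  have hnode : ∀ r ∈ s,
      P.eval (x r) / ∏ b ∈ S.erase (x r), (x r - b) = q * (1 - q) * pieriCoeff s x q r :=
    fun r hr => by rw [prod_erase_insert_insert_image hx hr h0 hqinv, hPeval,
      mul_pieriCoeff_eq hx hr (hx₀ r hr) (hqx r hr) hq]
  have key := sum_eval_div_prod_sub_eq_zero S (P := P) (by omega)
  rw [sum_insert h0, hzero, sum_insert hqinv, hpole, zero_div, zero_add, sum_image hx,
    sum_congr rfl hnode, ← mul_sum] at key
  refine eq_inv_of_mul_eq_one_right ?_
  have hq' : q * ((1 - q) * ∑ r ∈ s, pieriCoeff s x q r - 1) = 0 := by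
    linear_combination key
  exact sub_eq_zero.mp ((mul_eq_zero.mp hq').resolve_left hq)

end PartialFractions

section Vandermonde

variable {R : Type*} [CommRing R]

def vandermondeProd (n : ℕ) (x : ℕ → R) : R := ∏ j ∈ range n, ∏ i ∈ range j, (x j - x i)

theorem vandermondeProd_ne_zero [IsDomain R] {n : ℕ} {x : ℕ → R} (hx : Set.InjOn x (range n)) :
    vandermondeProd n x ≠ 0 :=
  prod_ne_zero_iff.mpr fun _ hj => prod_ne_zero_iff.mpr fun _ hi => sub_ne_zero.mpr fun h =>
    (mem_range.mp hi).ne' (hx hj (mem_range.mpr ((mem_range.mp hi).trans (mem_range.mp hj))) h)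

theorem vandermondeProd_mul_prod_erase {x y : ℕ → R} {r n : ℕ} (hrn : r < n)
    (hxy : ∀ i ≠ r, y i = x i) :
    vandermondeProd n y * ∏ j ∈ (range n).erase r, (x j - x r) =
      vandermondeProd n x * ∏ j ∈ (range n).erase r, (x j - y r) := by
  induction n, hrn using Nat.le_induction with
  | base =>
    have hV : vandermondeProd r y = vandermondeProd r x :=
      prod_congr rfl fun j hj => prod_congr rfl fun i hi => by
        rw [hxy j (mem_range.mp hj).ne, hxy i ((mem_range.mp hi).trans (mem_range.mp hj)).ne]
    rw [vandermondeProd, vandermondeProd, prod_range_succ, prod_range_succ, ← vandermondeProd,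
      ← vandermondeProd, hV, range_add_one, erase_insert notMem_range_self,
      prod_congr rfl fun i hi => by rw [hxy i (mem_range.mp hi).ne], mul_assoc, mul_assoc,
      ← prod_mul_distrib, ← prod_mul_distrib]
    exact congrArg _ (prod_congr rfl fun i _ => by ring)
  | succ n hrn ih =>
    have hr : r ∈ range n := mem_range.mpr hrn
    have hrow : (∏ i ∈ range n, (x n - y i)) * (x n - x r) =
        (∏ i ∈ range n, (x n - x i)) * (x n - y r) := by
      rw [← mul_prod_erase _ _ hr, ← mul_prod_erase _ (fun i => x n - x i) hr,
        prod_congr rfl fun i hi => by rw [hxy i (ne_of_mem_erase hi)]]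
      ring
    rw [vandermondeProd, vandermondeProd, prod_range_succ, prod_range_succ, ← vandermondeProd,
      ← vandermondeProd, range_add_one, erase_insert_of_ne (by omega), prod_insert (by simp),
      prod_insert (by simp), hxy n (by omega)]
    linear_combination (∏ i ∈ range n, (x n - y i)) * (x n - x r) * ih +
      vandermondeProd n x * (∏ j ∈ (range n).erase r, (x j - y r)) * hrow

theorem vandermondeProd_pow (q : R) {b : ℕ → ℕ} (hb : Antitone b) (M : ℕ) :
    vandermondeProd (M + 1) (fun i => q ^ b i) = q ^ (∑ j ∈ range (M + 1), j * b j) *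
      ∏ i ∈ range (M + 1), ∏ j ∈ Ioc i M, (1 - q ^ (b i - b j)) := by
  have hfactor (j : ℕ) : ∀ i ∈ range j, q ^ b j - q ^ b i = q ^ b j * (1 - q ^ (b i - b j)) :=
    fun i hi => by rw [mul_sub, mul_one, ← pow_add, Nat.add_sub_cancel' (hb (mem_range.mp hi).le)]
  rw [vandermondeProd]
  simp_rw [prod_congr rfl (hfactor _), prod_mul_distrib, prod_const, card_range, ← pow_mul,
    prod_pow_eq_pow_sum, mul_comm (b _)]
  congr 1
  exact prod_comm' fun j i => by simp only [mem_range, mem_Ioc]; omega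

end Vandermonde

namespace YoungDiagram

variable (κ : YoungDiagram)

theorem fst_lt_colLen_zero {c : ℕ × ℕ} (hc : c ∈ κ) : c.1 < κ.colLen 0 :=
  mem_iff_lt_colLen.mp (κ.up_left_mem le_rfl (Nat.zero_le _) hc)

theorem snd_lt_rowLen_zero {c : ℕ × ℕ} (hc : c ∈ κ) : c.2 < κ.rowLen 0 :=
  mem_iff_lt_rowLen.mp (κ.up_left_mem (Nat.zero_le _) le_rfl hc)

theorem rowLen_eq_zero {i : ℕ} (hi : κ.colLen 0 ≤ i) : κ.rowLen i = 0 :=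
  Nat.eq_zero_of_not_pos fun h => hi.not_gt (mem_iff_lt_colLen.mp (mem_iff_lt_rowLen.mpr h))

theorem mk_rowLen_notMem (r : ℕ) : (r, κ.rowLen r) ∉ κ := by simp [mem_iff_lt_rowLen]

theorem prod_cells_eq_prod_range_rowLen {α : Type*} [CommMonoid α] {N : ℕ}
    (hN : κ.colLen 0 ≤ N) (f : ℕ × ℕ → α) :
    ∏ c ∈ κ.cells, f c = ∏ i ∈ range N, ∏ j ∈ range (κ.rowLen i), f (i, j) :=
  prod_finset_product _ _ _ fun c => by
    rw [mem_cells, mem_range, mem_range, ← mem_iff_lt_rowLen]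
    exact ⟨fun hc => ⟨(κ.fst_lt_colLen_zero hc).trans_le hN, hc⟩, And.right⟩

theorem sum_cells_eq_sum_range_colLen {α : Type*} [AddCommMonoid α] {N : ℕ}
    (hN : κ.rowLen 0 ≤ N) (f : ℕ × ℕ → α) :
    ∑ c ∈ κ.cells, f c = ∑ j ∈ range N, ∑ i ∈ range (κ.colLen j), f (i, j) :=
  sum_finset_product_right _ _ _ fun c => by
    rw [mem_cells, mem_range, mem_range, ← mem_iff_lt_colLen]
    exact ⟨fun hc => ⟨(κ.snd_lt_rowLen_zero hc).trans_le hN, hc⟩, And.right⟩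

theorem hook_add_eq_rowLen_add_colLen {r j : ℕ} (hj : j < κ.rowLen r) :
    hook κ (r, j) + (j + r + 1) = κ.rowLen r + κ.colLen j := by
  have := mem_iff_lt_colLen.mp (mem_iff_lt_rowLen.mpr hj)
  simp only [hook, arm, leg]
  omega

theorem hook_strictAntiOn (r : ℕ) :
    StrictAntiOn (fun j => hook κ (r, j)) (range (κ.rowLen r)) := fun j hj j' hj' hjj' => by
  have := κ.hook_add_eq_rowLen_add_colLen (mem_range.mp hj)
  have := κ.hook_add_eq_rowLen_add_colLen (mem_range.mp hj')
  have := κ.colLen_anti j j' hjj'.le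
  simp only
  omega

def betaNumber (M i : ℕ) : ℕ := κ.rowLen i + (M - i)

theorem betaNumber_antitone (M : ℕ) : Antitone (κ.betaNumber M) :=
  fun i j hij => add_le_add (κ.rowLen_anti i j hij) (Nat.sub_le_sub_left hij M)

theorem betaNumber_strictAntiOn (M : ℕ) : StrictAntiOn (κ.betaNumber M) (range (M + 1)) :=
  fun i _ j hj hij => by
    have := κ.rowLen_anti i j hij.le
    simp only [betaNumber, coe_range, Set.mem_Iio] at hj ⊢
    omega

variable {κ} {M r : ℕ}

theorem hook_le_betaNumber (hM : κ.colLen 0 ≤ M + 1) {j : ℕ} (hj : j < κ.rowLen r) :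
    hook κ (r, j) ≤ κ.betaNumber M r := by
  have := κ.hook_add_eq_rowLen_add_colLen hj
  have := κ.colLen_anti 0 j j.zero_le
  simp only [betaNumber]
  omega

theorem hook_ne_betaNumber_sub {i j : ℕ} (hj : j < κ.rowLen r) (hri : r < i) (hiM : i ≤ M) :
    hook κ (r, j) ≠ κ.betaNumber M r - κ.betaNumber M i := by
  have := κ.hook_add_eq_rowLen_add_colLen hj
  have := κ.rowLen_anti r i hri.le
  have hij : j < κ.rowLen i ↔ i < κ.colLen j := mem_iff_lt_rowLen.symm.trans mem_iff_lt_colLen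
  simp only [betaNumber]
  omega

theorem prod_Icc_betaNumber {α : Type*} [CommMonoid α] (hM : κ.colLen 0 ≤ M + 1) (hr : r ≤ M)
    (f : ℕ → α) :
    ∏ k ∈ Icc 1 (κ.betaNumber M r), f k = (∏ j ∈ range (κ.rowLen r), f (hook κ (r, j))) *
      ∏ i ∈ Ioc r M, f (κ.betaNumber M r - κ.betaNumber M i) := by
  have hmem {i : ℕ} (hi : i ≤ M) : i ∈ (range (M + 1) : Set ℕ) :=
    mem_coe.mpr (mem_range.mpr (Nat.lt_succ_of_le hi))
  have hβ (i : ℕ) (hi : i ∈ Ioc r M) : κ.betaNumber M i < κ.betaNumber M r :=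
    κ.betaNumber_strictAntiOn M (hmem hr) (hmem (mem_Ioc.mp hi).2) (mem_Ioc.mp hi).1
  have hinj : Set.InjOn (fun i => κ.betaNumber M r - κ.betaNumber M i) (Ioc r M) :=
    fun i hi i' hi' h => (κ.betaNumber_strictAntiOn M).injOn (hmem (mem_Ioc.mp hi).2)
      (hmem (mem_Ioc.mp hi').2) (by have := hβ i hi; have := hβ i' hi'; simp only at h; omega)
  have hdisj : Disjoint ((range (κ.rowLen r)).image fun j => hook κ (r, j))
      ((Ioc r M).image fun i => κ.betaNumber M r - κ.betaNumber M i) := by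
    simp only [disjoint_left, mem_image, mem_range, mem_Ioc, not_exists, not_and]
    rintro _ ⟨j, hj, rfl⟩ i ⟨hri, hiM⟩
    exact (hook_ne_betaNumber_sub hj hri hiM).symm
  have hsub : (range (κ.rowLen r)).image (fun j => hook κ (r, j)) ∪
      (Ioc r M).image (fun i => κ.betaNumber M r - κ.betaNumber M i) ⊆
        Icc 1 (κ.betaNumber M r) := by
    refine union_subset (fun k hk => ?_) (fun k hk => ?_) <;>
      simp only [mem_image, mem_range, mem_Icc] at hk ⊢
    · obtain ⟨j, hj, rfl⟩ := hk
      exact ⟨Nat.le_add_left 1 _, hook_le_betaNumber hM hj⟩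
    · obtain ⟨i, hi, rfl⟩ := hk
      have := hβ i hi
      omega
  rw [← prod_image (κ.hook_strictAntiOn r).injOn, ← prod_image hinj, ← prod_union hdisj,
    eq_of_subset_of_card_le hsub]
  rw [card_union_of_disjoint hdisj, card_image_of_injOn (κ.hook_strictAntiOn r).injOn,
    card_image_of_injOn hinj, card_range, Nat.card_Icc, Nat.card_Ioc, betaNumber]
  omega

theorem prod_hook_mul_prod_betaNumber_sub {α : Type*} [CommMonoid α] (hM : κ.colLen 0 ≤ M + 1)
    (f : ℕ → α) :
    (∏ c ∈ κ.cells, f (hook κ c)) *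
        ∏ r ∈ range (M + 1), ∏ i ∈ Ioc r M, f (κ.betaNumber M r - κ.betaNumber M i) =
      ∏ r ∈ range (M + 1), ∏ k ∈ Icc 1 (κ.betaNumber M r), f k := by
  rw [κ.prod_cells_eq_prod_range_rowLen hM, ← prod_mul_distrib]
  exact prod_congr rfl fun r hr =>
    (prod_Icc_betaNumber hM (Nat.lt_succ_iff.mp (mem_range.mp hr)) f).symm

variable (κ) in
def AddableRow (r : ℕ) : Prop := ∀ i < r, κ.rowLen r < κ.rowLen i

variable (κ) in
/-- Joining the rectangle below `(r, κ.rowLen r)` gives a Young diagram for every `r`; when row `r`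
is addable this adds exactly the cell `(r, κ.rowLen r)` (`cells_addCell`). -/
def addCell (r : ℕ) : YoungDiagram where
  cells := κ.cells ∪ Iic (r, κ.rowLen r)
  isLowerSet := by
    rw [coe_union, coe_Iic]
    exact κ.isLowerSet.union (isLowerSet_Iic _)

theorem AddableRow.le_colLen (hr : κ.AddableRow r) : r ≤ κ.colLen 0 := by
  by_contra! h
  have := hr (r - 1) (by omega)
  rw [κ.rowLen_eq_zero (by omega : κ.colLen 0 ≤ r - 1)] at this
  omega

theorem cells_addCell (hr : κ.AddableRow r) :
    (κ.addCell r).cells = insert (r, κ.rowLen r) κ.cells := by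
  ext ⟨i, j⟩
  simp only [addCell, mem_union, mem_Iic, mem_insert, mem_cells, mem_iff_lt_rowLen,
    Prod.mk_le_mk, Prod.mk.injEq]
  constructor
  · rintro (h | ⟨hi, hj⟩)
    · exact Or.inr h
    · rcases hi.lt_or_eq with hi | rfl
      · have := hr i hi
        omega
      · omega
  · rintro (⟨rfl, rfl⟩ | h)
    · exact Or.inr ⟨le_rfl, le_rfl⟩
    · exact Or.inl h

theorem covers_iff_exists_addCell {ν : YoungDiagram} :
    Covers κ ν ↔ ∃ r, κ.AddableRow r ∧ κ.addCell r = ν := by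
  classical
  constructor
  · rintro ⟨hsub, hcard⟩
    obtain ⟨⟨r, j⟩, hc, hcν⟩ := exists_eq_insert_iff.mpr ⟨hsub, hcard.symm⟩
    have hbelow : ∀ d ≤ (r, j), d ≠ (r, j) → d ∈ κ := fun d hd hne => by
      have hd : d ∈ ν.cells :=
        ν.isLowerSet hd (by rw [mem_coe, ← hcν]; exact mem_insert_self _ _)
      rw [← hcν, mem_insert] at hd
      exact (mem_cells _).mp (hd.resolve_left hne)
    have hj : j = κ.rowLen r := by
      refine le_antisymm (not_lt.mp fun h => ?_) (not_lt.mp fun h => hc (mem_iff_lt_rowLen.mpr h))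
      exact κ.mk_rowLen_notMem r (hbelow _ ⟨le_rfl, h.le⟩ (by simp [h.ne]))
    subst hj
    have hr : κ.AddableRow r := fun i hi =>
      mem_iff_lt_rowLen.mp (hbelow _ ⟨hi.le, le_rfl⟩ (by simp [hi.ne]))
    exact ⟨r, hr, YoungDiagram.ext (by rw [cells_addCell hr, hcν])⟩
  · rintro ⟨r, hr, rfl⟩
    refine ⟨by rw [cells_addCell hr]; exact subset_insert _ _, ?_⟩
    rw [cells_addCell hr, card_insert_of_notMem (κ.mk_rowLen_notMem r)]

theorem addCell_injOn : Set.InjOn κ.addCell {r | κ.AddableRow r} := by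
  intro r hr r' hr' h
  have hmem := mem_insert_self (r, κ.rowLen r) κ.cells
  rw [← cells_addCell hr, h, cells_addCell hr', mem_insert] at hmem
  exact congrArg Prod.fst (hmem.resolve_right (κ.mk_rowLen_notMem r))

theorem rowLen_addCell (hr : κ.AddableRow r) (i : ℕ) :
    (κ.addCell r).rowLen i = κ.rowLen i + if i = r then 1 else 0 := by
  refine eq_of_forall_lt_iff fun j => ?_
  rw [← mem_iff_lt_rowLen, ← mem_cells, cells_addCell hr, mem_insert, mem_cells,
    mem_iff_lt_rowLen, Prod.mk.injEq]
  split_ifs with h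
  · subst h
    omega
  · omega

theorem colLen_addCell_le (hr : κ.AddableRow r) : (κ.addCell r).colLen 0 ≤ κ.colLen 0 + 1 := by
  refine not_lt.mp fun h => ?_
  have hmem := mem_iff_lt_colLen.mpr h
  rw [← mem_cells, cells_addCell hr, mem_insert, Prod.mk.injEq, mem_cells,
    mem_iff_lt_colLen] at hmem
  have := hr.le_colLen
  omega

theorem betaNumber_addCell (hr : κ.AddableRow r) (M i : ℕ) :
    (κ.addCell r).betaNumber M i = κ.betaNumber M i + if i = r then 1 else 0 := by
  rw [betaNumber, betaNumber, rowLen_addCell hr]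
  ring

end YoungDiagram

theorem nstat_eq_sum_fst (κ : YoungDiagram) : nstat κ = ∑ c ∈ κ.cells, (c.1 : ℤ) := by
  rw [nstat, κ.sum_cells_eq_sum_range_colLen le_rfl, κ.sum_cells_eq_sum_range_colLen le_rfl]
  refine sum_congr rfl fun j _ => ?_
  rw [← sum_range_reflect]
  refine sum_congr rfl fun i hi => ?_
  have := mem_range.mp hi
  simp only [leg]
  congr 2
  omega

theorem nstat_addCell {κ : YoungDiagram} {r : ℕ} (hr : κ.AddableRow r) :
    nstat (κ.addCell r) = nstat κ + r := by
  rw [nstat_eq_sum_fst, nstat_eq_sum_fst, YoungDiagram.cells_addCell hr,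
    sum_insert (κ.mk_rowLen_notMem r), add_comm]

section PrincipalSpecialization

open RatFunc YoungDiagram

def qPochhammer (n : ℕ) : RatFunc ℚ := ∏ k ∈ Icc 1 n, (1 - X ^ k)

def betaPowers (κ : YoungDiagram) (M i : ℕ) : RatFunc ℚ := X ^ κ.betaNumber M i

theorem X_pow_injective : Function.Injective fun n : ℕ => (X : RatFunc ℚ) ^ n := by
  intro a b h
  have : (Polynomial.X : Polynomial ℚ) ^ a = Polynomial.X ^ b :=
    RatFunc.algebraMap_injective ℚ (by simpa using h)
  simpa using congrArg Polynomial.natDegree this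

theorem one_sub_X_pow_ne_zero {k : ℕ} (hk : k ≠ 0) : (1 : RatFunc ℚ) - X ^ k ≠ 0 :=
  sub_ne_zero.mpr fun h => hk (X_pow_injective (by simpa using h.symm))

theorem Hq_ne_zero (κ : YoungDiagram) : Hq κ ≠ 0 :=
  prod_ne_zero_iff.mpr fun _ _ => one_sub_X_pow_ne_zero (Nat.succ_ne_zero _)

theorem qPochhammer_succ (n : ℕ) : qPochhammer (n + 1) = (1 - X ^ (n + 1)) * qPochhammer n := by
  rw [qPochhammer, prod_Icc_succ_top (by omega), mul_comm, qPochhammer]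

variable {κ : YoungDiagram} {M r : ℕ}

theorem betaPowers_injOn : Set.InjOn (betaPowers κ M) (range (M + 1)) :=
  X_pow_injective.comp_injOn (κ.betaNumber_strictAntiOn M).injOn

theorem one_sub_X_mul_betaPowers_ne_zero : 1 - X * betaPowers κ M r ≠ 0 := by
  rw [betaPowers, ← pow_succ']
  exact one_sub_X_pow_ne_zero (Nat.succ_ne_zero _)

theorem Hq_mul_vandermondeProd (hM : κ.colLen 0 ≤ M + 1) :
    Hq κ * vandermondeProd (M + 1) (betaPowers κ M) =
      X ^ (∑ i ∈ range (M + 1), i * κ.betaNumber M i) *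
        ∏ i ∈ range (M + 1), qPochhammer (κ.betaNumber M i) := by
  unfold betaPowers
  rw [vandermondeProd_pow _ (κ.betaNumber_antitone M), mul_left_comm, Hq,
    prod_hook_mul_prod_betaNumber_sub hM fun k => 1 - X ^ k]
  rfl

theorem Hq_addCell_mul_prod_erase (hM : κ.colLen 0 ≤ M) (hr : κ.AddableRow r) :
    Hq (κ.addCell r) * ∏ j ∈ (range (M + 1)).erase r, (betaPowers κ M j - X * betaPowers κ M r) =
      X ^ r * (1 - X * betaPowers κ M r) * Hq κ *
        ∏ j ∈ (range (M + 1)).erase r, (betaPowers κ M j - betaPowers κ M r) := by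
  have hβ := betaNumber_addCell hr M
  have hrM : r ∈ range (M + 1) := mem_range.mpr (by have := hr.le_colLen; omega)
  have hκ := Hq_mul_vandermondeProd (κ := κ) (M := M) (by omega)
  have hν := Hq_mul_vandermondeProd (κ := κ.addCell r) (M := M)
    ((colLen_addCell_le hr).trans (by omega))
  have hexp : ∑ i ∈ range (M + 1), i * (κ.addCell r).betaNumber M i =
      ∑ i ∈ range (M + 1), i * κ.betaNumber M i + r := by
    simp only [hβ, mul_add, sum_add_distrib, mul_ite, mul_one, mul_zero, sum_ite_eq', if_pos hrM]
  have hpoch : ∏ i ∈ range (M + 1), qPochhammer ((κ.addCell r).betaNumber M i) =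
      (1 - X * betaPowers κ M r) * ∏ i ∈ range (M + 1), qPochhammer (κ.betaNumber M i) := by
    rw [← mul_prod_erase _ _ hrM, ← mul_prod_erase _ (fun i => qPochhammer _) hrM, hβ,
      if_pos rfl, qPochhammer_succ, betaPowers, pow_succ', mul_assoc]
    congr 2
    exact prod_congr rfl fun i hi => by rw [hβ, if_neg (ne_of_mem_erase hi), add_zero]
  have hV := vandermondeProd_mul_prod_erase (x := betaPowers κ M)
    (y := betaPowers (κ.addCell r) M) (mem_range.mp hrM) fun i hi => by simp [betaPowers, hβ, hi]
  rw [show betaPowers (κ.addCell r) M r = X * betaPowers κ M r by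
    rw [betaPowers, betaPowers, hβ, if_pos rfl, pow_succ']] at hV
  rw [hexp, hpoch] at hν
  refine mul_left_cancel₀ (vandermondeProd_ne_zero (betaPowers_injOn (κ := κ) (M := M))) ?_
  linear_combination -Hq (κ.addCell r) * hV +
    (∏ j ∈ (range (M + 1)).erase r, (betaPowers κ M j - betaPowers κ M r)) * hν -
    X ^ r * (1 - X * betaPowers κ M r) *
      (∏ j ∈ (range (M + 1)).erase r, (betaPowers κ M j - betaPowers κ M r)) * hκ

theorem X_pow_nstat_div_Hq_addCell (hM : κ.colLen 0 ≤ M) (hr : κ.AddableRow r) :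
    (X : RatFunc ℚ) ^ nstat (κ.addCell r) / Hq (κ.addCell r) =
      X ^ nstat κ / Hq κ * pieriCoeff (range (M + 1)) (betaPowers κ M) X r := by
  have hrM : r ∈ range (M + 1) := mem_range.mpr (by have := hr.le_colLen; omega)
  have hdist : ∏ j ∈ (range (M + 1)).erase r, (betaPowers κ M j - betaPowers κ M r) ≠ 0 :=
    prod_ne_zero_iff.mpr fun j hj => sub_ne_zero.mpr fun h =>
      ne_of_mem_erase hj (betaPowers_injOn (mem_of_mem_erase hj) hrM h)
  have := one_sub_X_mul_betaPowers_ne_zero (κ := κ) (M := M) (r := r)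
  have := Hq_ne_zero κ
  have := Hq_ne_zero (κ.addCell r)
  rw [nstat_addCell hr, zpow_add₀ X_ne_zero, zpow_natCast, pieriCoeff, prod_div_distrib]
  field_simp
  linear_combination -X ^ nstat κ * Hq_addCell_mul_prod_erase hM hr

theorem pieriCoeff_betaPowers_eq_zero (hrM : r ≤ M) (hr : ¬κ.AddableRow r) :
    pieriCoeff (range (M + 1)) (betaPowers κ M) X r = 0 := by
  obtain ⟨i, hir, hi⟩ : ∃ i < r, κ.rowLen i ≤ κ.rowLen r := by simpa [AddableRow] using hr
  have h₁ := κ.rowLen_anti i (r - 1) (by omega)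
  have h₂ := κ.rowLen_anti (r - 1) r (by omega)
  refine pieriCoeff_eq_zero (j := r - 1) (mem_range.mpr (by omega)) (by omega) ?_
  rw [betaPowers, betaPowers, ← pow_succ']
  congr 1
  simp only [betaNumber]
  omega

theorem sum_pieriCoeff_betaPowers (hM : κ.colLen 0 ≤ M) :
    ∑ r ∈ range (M + 1), pieriCoeff (range (M + 1)) (betaPowers κ M) X r = (1 - X)⁻¹ :=
  sum_pieriCoeff betaPowers_injOn (fun _ _ => pow_ne_zero _ X_ne_zero)
    (fun _ _ h => one_sub_X_mul_betaPowers_ne_zero (by rw [h, sub_self]))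
    ⟨M, mem_range.mpr M.lt_succ_self, by
      rw [betaPowers, betaNumber, κ.rowLen_eq_zero hM, Nat.sub_self, pow_zero]⟩
    X_ne_zero

end PrincipalSpecialization

/-- For every partition `λ`:
`∑_{ν ∈ U(λ)} q^{n(ν)} / H_ν(q) = (1/(1−q)) q^{n(λ)} / H_λ(q)` in `ℚ(q)`. -/
theorem principal_specialization_pieri (l : YoungDiagram) :
    ∑ᶠ ν ∈ {ν : YoungDiagram | Covers l ν}, RatFunc.X ^ (nstat ν) / Hq ν
      = (1 / (1 - RatFunc.X)) * RatFunc.X ^ (nstat l) / Hq l := by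
  classical
  set M := l.colLen 0
  have hcovers : {ν | Covers l ν} = l.addCell '' ↑((range (M + 1)).filter l.AddableRow) := by
    ext ν
    simp only [Set.mem_ofPred_eq, YoungDiagram.covers_iff_exists_addCell, coe_filter, mem_range,
      Set.mem_image]
    exact exists_congr fun r => and_congr_left fun _ =>
      ⟨fun hr => ⟨Nat.lt_succ_of_le hr.le_colLen, hr⟩, And.right⟩
  have hinj : Set.InjOn l.addCell ↑((range (M + 1)).filter l.AddableRow) :=
    l.addCell_injOn.mono fun r hr => (mem_filter.mp (mem_coe.mp hr)).2
  rw [hcovers, finsum_mem_image hinj, finsum_mem_coe_finset,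
    sum_congr rfl fun r hr => X_pow_nstat_div_Hq_addCell le_rfl (mem_filter.mp hr).2,
    sum_filter_of_ne fun r hr h => not_not.mp fun hr' => h (by
      rw [pieriCoeff_betaPowers_eq_zero (Nat.lt_succ_iff.mp (mem_range.mp hr)) hr', mul_zero]),
    ← mul_sum, sum_pieriCoeff_betaPowers le_rfl]
  ring

end
end
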